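/- arXiv:1505.01722 — 10 statements merged into one kernel-verified Lean document; each statement's English description precedes it below -/
import Mathlib

section
/- For the recurrence f_m = (f_{m-1}^2 + β)/f_{m-2} with f_0 = X, f_1 = Y and β a nonzero constant in a field k, every iterate f_m (m ≥ 0) is a Laurent polynomial in X and Y over k. -/
/-!
Two consecutive instances of the recurrence, `f (m+2) f m - f (m+1)^2 = β` and
`f (m+3) f (m+1) - f (m+2)^2 = β`, subtract to
`f (m+1) (f (m+3) + f (m+1)) = f (m+2) (f (m+2) + f m)`. Hence the ratio
`(f (m+2) + f m) / f (m+1)` does not depend on `m`; computed at `m = 0` it is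
`c = (X^2 + Y^2 + β) / (X Y)`, a Laurent polynomial. The sequence therefore satisfies the
linear recurrence `f (m+2) = c f (m+1) - f m`, which only involves ring operations.
-/

open MvPolynomial

section QuadraticRecurrence

variable {K : Type*} [Field K] {b : K} {f : ℕ → K}

theorem add_eq_mul_of_mul_eq_sq_add (hne : ∀ m, f m ≠ 0)
    (hrec : ∀ m, f (m + 2) * f m = f (m + 1) ^ 2 + b) :
    ∀ m, f (m + 2) + f m = (f 0 ^ 2 + f 1 ^ 2 + b) / (f 0 * f 1) * f (m + 1)
  | 0 => by
    have := hne 0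
    have := hne 1
    field_simp
    linear_combination hrec 0
  | m + 1 => by
    have ih := add_eq_mul_of_mul_eq_sq_add hne hrec m
    refine mul_left_cancel₀ (hne (m + 1)) ?_
    linear_combination hrec (m + 1) - hrec m + f (m + 2) * ih

end QuadraticRecurrence

theorem mem_of_add_eq_mul {R σ : Type*} [Ring R] [SetLike σ R] [SubringClass σ R] {s : σ}
    {f : ℕ → R} {c : R} (hc : c ∈ s) (h0 : f 0 ∈ s) (h1 : f 1 ∈ s)
    (hf : ∀ m, f (m + 2) + f m = c * f (m + 1)) : ∀ m, f m ∈ s :=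
  Nat.twoStepInduction h0 h1 fun m hm hm1 => by
    rw [eq_sub_of_add_eq (hf m)]
    exact sub_mem (mul_mem hc hm1) hm

theorem laurent_property_of_quadratic_recurrence_general
    (k : Type*) [Field k] (β : k)
    (x y : FractionRing (MvPolynomial (Fin 2) k))
    (f : ℕ → FractionRing (MvPolynomial (Fin 2) k))
    (h0 : f 0 = x) (h1 : f 1 = y)
    (hne : ∀ m, f m ≠ 0)
    (hrec : ∀ m, f (m + 2) * f m = f (m + 1) ^ 2
      + algebraMap (MvPolynomial (Fin 2) k) _ (C β)) :
    ∀ m, f m ∈ Algebra.adjoin k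
      ({x, y, x⁻¹, y⁻¹} : Set (FractionRing (MvPolynomial (Fin 2) k))) := by
  set S := Algebra.adjoin k ({x, y, x⁻¹, y⁻¹} : Set (FractionRing (MvPolynomial (Fin 2) k)))
  have hx : x ∈ S := Algebra.subset_adjoin (by simp)
  have hy : y ∈ S := Algebra.subset_adjoin (by simp)
  have hx' : x⁻¹ ∈ S := Algebra.subset_adjoin (by simp)
  have hy' : y⁻¹ ∈ S := Algebra.subset_adjoin (by simp)
  have hC : algebraMap (MvPolynomial (Fin 2) k) _ (C β) ∈ S := by
    rw [← algebraMap_eq, ← IsScalarTower.algebraMap_apply]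
    exact S.algebraMap_mem β
  have hc : (x ^ 2 + y ^ 2 + algebraMap (MvPolynomial (Fin 2) k) _ (C β)) / (x * y) ∈ S := by
    rw [div_eq_mul_inv, mul_inv]
    exact mul_mem (add_mem (add_mem (pow_mem hx 2) (pow_mem hy 2)) hC) (mul_mem hx' hy')
  refine mem_of_add_eq_mul hc (h0 ▸ hx) (h1 ▸ hy) ?_
  simpa only [h0, h1] using add_eq_mul_of_mul_eq_sq_add hne hrec

/-- For the recurrence `f m = (f (m-1)^2 + β) / f (m-2)` with
`f 0 = X`, `f 1 = Y` and `β ≠ 0`, every iterate is a Laurent polynomial in `X, Y`,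
i.e. lies in the subalgebra of the rational function field `k(X,Y)` generated by
`X`, `Y`, `X⁻¹`, `Y⁻¹`. -/
theorem laurent_property_of_quadratic_recurrence
    (k : Type*) [Field k] (β : k) (hβ : β ≠ 0)
    (x y : FractionRing (MvPolynomial (Fin 2) k))
    (hx : x = algebraMap (MvPolynomial (Fin 2) k) _ (X 0))
    (hy : y = algebraMap (MvPolynomial (Fin 2) k) _ (X 1))
    (f : ℕ → FractionRing (MvPolynomial (Fin 2) k))
    (h0 : f 0 = x) (h1 : f 1 = y)
    (hne : ∀ m, f m ≠ 0)
    (hrec : ∀ m, f (m + 2) * f m = f (m + 1) ^ 2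
      + algebraMap (MvPolynomial (Fin 2) k) _ (C β)) :
    ∀ m, f m ∈ Algebra.adjoin k
      ({x, y, x⁻¹, y⁻¹} : Set (FractionRing (MvPolynomial (Fin 2) k))) :=
  laurent_property_of_quadratic_recurrence_general k β x y f h0 h1 hne hrec
end

section
/- For the recurrence f_m = (f_{m-1}^2 + β)/f_{m-2}, consecutive iterates f_{m-1} and f_m are coprime as Laurent polynomials in the initial values X and Y. -/
open MvPolynomial

/-- For the recurrence `f m = (f (m-1)^2 + β) / f (m-2)` with
`f 0 = X`, `f 1 = Y`, consecutive iterates are coprime (no common non-unit factor)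
in the Laurent polynomial ring, realized as the subalgebra of `k(X,Y)` generated by
`X`, `Y`, `X⁻¹`, `Y⁻¹`. -/
theorem consecutive_iterates_coprime
    (k : Type*) [Field k] (β : k) (hβ : β ≠ 0)
    (x y : FractionRing (MvPolynomial (Fin 2) k))
    (hx : x = algebraMap (MvPolynomial (Fin 2) k) _ (X 0))
    (hy : y = algebraMap (MvPolynomial (Fin 2) k) _ (X 1))
    (f : ℕ → FractionRing (MvPolynomial (Fin 2) k))
    (h0 : f 0 = x) (h1 : f 1 = y)
    (hne : ∀ m, f m ≠ 0)
    (hrec : ∀ m, f (m + 2) * f m = f (m + 1) ^ 2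
      + algebraMap (MvPolynomial (Fin 2) k) _ (C β))
    (hL : ∀ m, f m ∈ Algebra.adjoin k
      ({x, y, x⁻¹, y⁻¹} : Set (FractionRing (MvPolynomial (Fin 2) k)))) :
    ∀ m, IsRelPrime
      (⟨f m, hL m⟩ : Algebra.adjoin k
        ({x, y, x⁻¹, y⁻¹} : Set (FractionRing (MvPolynomial (Fin 2) k))))
      (⟨f (m + 1), hL (m + 1)⟩) := by
  intro m c hc1 hc2
  let A := Algebra.adjoin k
      ({x, y, x⁻¹, y⁻¹} : Set (FractionRing (MvPolynomial (Fin 2) k)))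
  -- the constant β as an element of A
  let b : A := algebraMap k A β
  have hbval : (b : FractionRing (MvPolynomial (Fin 2) k))
      = algebraMap (MvPolynomial (Fin 2) k) _ (C β) := by
    have : (b : FractionRing (MvPolynomial (Fin 2) k))
        = algebraMap k (FractionRing (MvPolynomial (Fin 2) k)) β := rfl
    rw [this, IsScalarTower.algebraMap_apply k (MvPolynomial (Fin 2) k)
      (FractionRing (MvPolynomial (Fin 2) k)) β]
    rfl
  have hbunit : IsUnit b := (hβ.isUnit).map (algebraMap k A)
  -- c divides b
  have key : (⟨f (m + 2), hL (m + 2)⟩ : A) * ⟨f m, hL m⟩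
      - (⟨f (m + 1), hL (m + 1)⟩ : A) ^ 2 = b := by
    apply Subtype.ext
    push_cast
    rw [hbval, hrec m]
    ring
  have hcb : c ∣ b := by
    rw [← key]
    exact dvd_sub (Dvd.dvd.mul_left hc1 _) (Dvd.dvd.pow hc2 two_ne_zero)
  exact isUnit_of_dvd_unit hcb hbunit
end

section
/- Let r ≥ 1 be an integer and let (α_m), (β_m) be sequences of nonzero elements of a field k satisfying α_m α_{m-2} β_{m-1}^r = β_m β_{m-2} for all m ≥ 4. Then every iterate of the recurrence f_m = (α_m f_{m-1}^r + β_m)/f_{m-2} with f_0 = X, f_1 = Y is a Laurent polynomial in X and Y. -/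
open MvPolynomial

lemma key_div {k R : Type*} [Field k] [CommRing R] [Algebra k R]
    (r : ℕ) (hr : 1 ≤ r)
    (a0 a1 a2 b0 b1 b2 : k) (ha0 : a0 ≠ 0) (hb0 : b0 ≠ 0)
    (hcond : a2 * a0 * b1 ^ r = b2 * b0)
    (e2 e1 e0 w : R)
    (R1 : w * e1 = algebraMap k R a1 * e0 ^ r + algebraMap k R b1)
    (R2 : e0 * e2 = algebraMap k R a0 * e1 ^ r + algebraMap k R b0) :
    e0 ∣ algebraMap k R a2 * w ^ r + algebraMap k R b2 := by
  set c := algebraMap k R with hc'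
  have he1r : e1 ^ (r - 1) * e1 = e1 ^ r := by
    rw [← pow_succ, Nat.sub_add_cancel hr]
  have hb0inv : c b0⁻¹ * c b0 = 1 := by rw [← map_mul, inv_mul_cancel₀ hb0, map_one]
  have cop : IsCoprime e0 (e1 ^ r) := by
    refine IsCoprime.pow_right ⟨c b0⁻¹ * e2, -(c b0⁻¹ * c a0 * e1 ^ (r - 1)), ?_⟩
    calc c b0⁻¹ * e2 * e0 + -(c b0⁻¹ * c a0 * e1 ^ (r - 1)) * e1
        = c b0⁻¹ * (e0 * e2) - c b0⁻¹ * c a0 * (e1 ^ (r - 1) * e1) := by ring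
      _ = 1 := by rw [he1r, R2]; linear_combination hb0inv
  have hX : e0 ∣ (c a1 * e0 ^ r + c b1) ^ r - (c b1) ^ r := by
    refine dvd_trans ?_ (sub_dvd_pow_sub_pow (c a1 * e0 ^ r + c b1) (c b1) r)
    simpa using (dvd_pow_self e0 (by omega : r ≠ 0)).mul_left (c a1)
  have hcc : c a2 * c a0 * (c b1) ^ r = c b2 * c b0 := by
    simpa [map_mul, map_pow] using congrArg c hcond
  have hmain : c a0 * (c a2 * (c b1) ^ r + c b2 * e1 ^ r) = e0 * (c b2 * e2) := by
    linear_combination (-(c b2)) * R2 + hcc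
  have h2 : e0 ∣ c a2 * (c b1) ^ r + c b2 * e1 ^ r := by
    refine ⟨c a0⁻¹ * (c b2 * e2), ?_⟩
    calc c a2 * (c b1) ^ r + c b2 * e1 ^ r
        = c a0⁻¹ * (c a0 * (c a2 * (c b1) ^ r + c b2 * e1 ^ r)) := by
          rw [← mul_assoc, ← map_mul, inv_mul_cancel₀ ha0, map_one, one_mul]
      _ = c a0⁻¹ * (e0 * (c b2 * e2)) := by rw [hmain]
      _ = e0 * (c a0⁻¹ * (c b2 * e2)) := by ring
  have hfinal : e1 ^ r * (c a2 * w ^ r + c b2)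
      = c a2 * ((c a1 * e0 ^ r + c b1) ^ r - (c b1) ^ r)
        + (c a2 * (c b1) ^ r + c b2 * e1 ^ r) := by
    have hw : (w * e1) ^ r = (c a1 * e0 ^ r + c b1) ^ r := by rw [R1]
    calc e1 ^ r * (c a2 * w ^ r + c b2) = c a2 * (w * e1) ^ r + c b2 * e1 ^ r := by
          rw [mul_pow]; ring
      _ = _ := by rw [hw]; ring
  have hdvd : e0 ∣ e1 ^ r * (c a2 * w ^ r + c b2) := by
    rw [hfinal]; exact dvd_add (hX.mul_left _) h2
  exact cop.dvd_of_dvd_mul_left hdvd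

/-- Let `r ≥ 1` and let `α m, β m` be nonzero parameters satisfying
`α m * α (m-2) * β (m-1) ^ r = β m * β (m-2)` for all `m ≥ 4`.  Then every iterate of
`f m = (α m * f (m-1) ^ r + β m) / f (m-2)` with `f 0 = X`, `f 1 = Y` is a Laurent
polynomial in `X` and `Y`. -/
theorem laurent_property_of_nonautonomous_recurrence
    (k : Type*) [Field k] (r : ℕ) (hr : 1 ≤ r)
    (α β : ℕ → k) (hα : ∀ m, α m ≠ 0) (hβ : ∀ m, β m ≠ 0)
    (hcond : ∀ m, α (m + 4) * α (m + 2) * β (m + 3) ^ r = β (m + 4) * β (m + 2))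
    (x y : FractionRing (MvPolynomial (Fin 2) k))
    (hx : x = algebraMap (MvPolynomial (Fin 2) k) _ (X 0))
    (hy : y = algebraMap (MvPolynomial (Fin 2) k) _ (X 1))
    (f : ℕ → FractionRing (MvPolynomial (Fin 2) k))
    (h0 : f 0 = x) (h1 : f 1 = y)
    (hne : ∀ m, f m ≠ 0)
    (hrec : ∀ m, f (m + 2) * f m
      = algebraMap (MvPolynomial (Fin 2) k) _ (C (α (m + 2))) * f (m + 1) ^ r
        + algebraMap (MvPolynomial (Fin 2) k) _ (C (β (m + 2)))) :
    ∀ m, f m ∈ Algebra.adjoin k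
      ({x, y, x⁻¹, y⁻¹} : Set (FractionRing (MvPolynomial (Fin 2) k))) := by
  have hconst : ∀ a : k,
      algebraMap (MvPolynomial (Fin 2) k) (FractionRing (MvPolynomial (Fin 2) k)) (C a)
        = algebraMap k _ a := fun a => by
    rw [← MvPolynomial.algebraMap_eq, ← IsScalarTower.algebraMap_apply]
  set A := Algebra.adjoin k
      ({x, y, x⁻¹, y⁻¹} : Set (FractionRing (MvPolynomial (Fin 2) k))) with hAdef
  have hxA : x ∈ A := Algebra.subset_adjoin (by simp)
  have hyA : y ∈ A := Algebra.subset_adjoin (by simp)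
  have hxiA : x⁻¹ ∈ A := Algebra.subset_adjoin (by simp)
  have hyiA : y⁻¹ ∈ A := Algebra.subset_adjoin (by simp)
  have hrec' : ∀ m, f (m + 2) * f m
      = algebraMap k _ (α (m + 2)) * f (m + 1) ^ r + algebraMap k _ (β (m + 2)) :=
    fun m => by simpa [hconst] using hrec m
  have hx0 : x ≠ 0 := by rw [← h0]; exact hne 0
  have hy0 : y ≠ 0 := by rw [← h1]; exact hne 1
  have hf2 : f 2 = (algebraMap k _ (α 2) * y ^ r + algebraMap k _ (β 2)) * x⁻¹ := by
    have h := hrec' 0; rw [h0, h1] at h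
    exact (eq_mul_inv_iff_mul_eq₀ hx0).mpr h
  have hf2A : f 2 ∈ A := by
    rw [hf2]
    exact mul_mem (add_mem (mul_mem (A.algebraMap_mem _) (pow_mem hyA r))
      (A.algebraMap_mem _)) hxiA
  have hf3 : f 3 = (algebraMap k _ (α 3) * f 2 ^ r + algebraMap k _ (β 3)) * y⁻¹ := by
    have h := hrec' 1; rw [h1] at h
    exact (eq_mul_inv_iff_mul_eq₀ hy0).mpr h
  have hf3A : f 3 ∈ A := by
    rw [hf3]
    exact mul_mem (add_mem (mul_mem (A.algebraMap_mem _) (pow_mem hf2A r))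
      (A.algebraMap_mem _)) hyiA
  suffices H : ∀ m, f m ∈ A ∧ f (m+1) ∈ A ∧ f (m+2) ∈ A ∧ f (m+3) ∈ A from fun m => (H m).1
  intro m
  induction m with
  | zero => exact ⟨by rw [h0]; exact hxA, by rw [h1]; exact hyA, hf2A, hf3A⟩
  | succ n ih =>
    obtain ⟨hA0, hA1, hA2, hA3⟩ := ih
    refine ⟨hA1, hA2, hA3, ?_⟩
    show f (n + 4) ∈ A
    have key := key_div (R := A) r hr (α (n+2)) (α (n+3)) (α (n+4)) (β (n+2)) (β (n+3)) (β (n+4))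
      (hα _) (hβ _) (hcond n) ⟨f n, hA0⟩ ⟨f (n+1), hA1⟩ ⟨f (n+2), hA2⟩ ⟨f (n+3), hA3⟩
      (Subtype.ext (hrec' (n+1))) (Subtype.ext (hrec' n))
    obtain ⟨t, ht⟩ := key
    have hcoe : algebraMap k _ (α (n+4)) * f (n+3) ^ r + algebraMap k _ (β (n+4))
        = f (n+2) * (t : FractionRing (MvPolynomial (Fin 2) k)) := congrArg Subtype.val ht
    have h4 : f (n+4) * f (n+2)
        = (t : FractionRing (MvPolynomial (Fin 2) k)) * f (n+2) := by
      rw [hrec' (n+2), hcoe]; ring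
    have : f (n+4) = (t : FractionRing (MvPolynomial (Fin 2) k)) :=
      mul_right_cancel₀ (hne (n+2)) h4
    rw [this]; exact t.2
end

section
/- The discrete Liouville lattice equation f_{l,m} = (f_{l,m-1} f_{l-1,m} + β)/f_{l-1,m-1} with initial data f_{l,0} = X_{l,0} and f_{0,m} = X_{0,m} has the Laurent property: every f_{l,m} with l,m ≥ 0 is a Laurent polynomial in the initial values. -/
/-!
Put `a l = f (l, 0)`, `c m = f (0, m)` and `f (l, m) = a l * c m / a 0 * g (l, m)`. The equation
becomes `g (l + 1, m + 1) * g (l, m) - g (l + 1, m) * g (l, m + 1) = β * a 0 ^ 2 * ΔU l * ΔV m`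
with `g = 1` on the boundary, where `U l = ∑ i < l, (a i * a (i + 1))⁻¹`,
`V m = ∑ j < m, (c j * c (j + 1))⁻¹` and `ΔU l = U (l + 1) - U l`, `ΔV m = V (m + 1) - V m`.
It is solved by `g = 1 + β * a 0 ^ 2 * U l * V m`, which is visibly a Laurent polynomial in the
boundary values. A nowhere vanishing solution is determined by its boundary values, since the
recurrence can be solved for `f (l + 1, m + 1)`, so `f` is this closed form.
-/

open MvPolynomial

section DiscreteLiouville

variable {R : Type*} [CommRing R]

def IsDiscreteLiouvilleSol (b : R) (f : ℕ × ℕ → R) : Prop :=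
  ∀ l m : ℕ, f (l + 1, m + 1) * f (l, m) = f (l + 1, m) * f (l, m + 1) + b

theorem IsDiscreteLiouvilleSol.eq_of_eqOn_boundary [IsDomain R] {b : R} {f g : ℕ × ℕ → R}
    (hf : IsDiscreteLiouvilleSol b f) (hg : IsDiscreteLiouvilleSol b g) (hne : ∀ p, f p ≠ 0)
    (hbd : ∀ p : ℕ × ℕ, p.1 = 0 ∨ p.2 = 0 → f p = g p) : f = g := by
  suffices h : ∀ l m, f (l, m) = g (l, m) from funext fun p => h p.1 p.2
  intro l
  induction l with
  | zero => exact fun m => hbd _ (Or.inl rfl)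
  | succ l ih =>
    intro m
    induction m with
    | zero => exact hbd _ (Or.inr rfl)
    | succ m ihm =>
      refine mul_right_cancel₀ (hne (l, m)) ?_
      rw [hf, ih m, hg, ihm, ih (m + 1)]

end DiscreteLiouville

section ClosedForm

variable {K : Type*} [Field K]

def sumInvConsecutiveProducts (s : ℕ → K) (n : ℕ) : K :=
  ∑ i ∈ Finset.range n, (s i * s (i + 1))⁻¹

theorem sumInvConsecutiveProducts_mem {S : Type*} [SetLike S K] [MulMemClass S K]
    [AddSubmonoidClass S K] {A : S} {s : ℕ → K} (hs : ∀ i, (s i)⁻¹ ∈ A) (n : ℕ) :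
    sumInvConsecutiveProducts s n ∈ A :=
  sum_mem fun i _ => mul_inv (s i) _ ▸ mul_mem (hs i) (hs (i + 1))

noncomputable def discreteLiouvilleClosedForm (b : K) (x : ℕ × ℕ → K) (p : ℕ × ℕ) : K :=
  x (p.1, 0) * x (0, p.2) / x (0, 0) *
    (1 + b * x (0, 0) ^ 2 * sumInvConsecutiveProducts (fun i => x (i, 0)) p.1 *
      sumInvConsecutiveProducts (fun j => x (0, j)) p.2)

theorem discreteLiouvilleClosedForm_mem_adjoin {k : Type*} [CommRing k] [Algebra k K] (β : k)
    (x : ℕ × ℕ → K) (p : ℕ × ℕ) :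
    discreteLiouvilleClosedForm (algebraMap k K β) x p ∈ Algebra.adjoin k
      {z : K | ∃ q : ℕ × ℕ, (q.1 = 0 ∨ q.2 = 0) ∧ (z = x q ∨ z = (x q)⁻¹)} := by
  set A := Algebra.adjoin k
    {z : K | ∃ q : ℕ × ℕ, (q.1 = 0 ∨ q.2 = 0) ∧ (z = x q ∨ z = (x q)⁻¹)}
  have hx : ∀ q : ℕ × ℕ, q.1 = 0 ∨ q.2 = 0 → x q ∈ A :=
    fun q hq => Algebra.subset_adjoin ⟨q, hq, Or.inl rfl⟩
  have hx_inv : ∀ q : ℕ × ℕ, q.1 = 0 ∨ q.2 = 0 → (x q)⁻¹ ∈ A :=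
    fun q hq => Algebra.subset_adjoin ⟨q, hq, Or.inr rfl⟩
  have hU := sumInvConsecutiveProducts_mem (A := A) (fun i => hx_inv (i, 0) (Or.inr rfl)) p.1
  have hV := sumInvConsecutiveProducts_mem (A := A) (fun j => hx_inv (0, j) (Or.inl rfl)) p.2
  rw [discreteLiouvilleClosedForm, div_eq_mul_inv]
  refine mul_mem (mul_mem (mul_mem (hx _ (Or.inr rfl)) (hx _ (Or.inl rfl)))
    (hx_inv _ (Or.inl rfl))) (add_mem (one_mem A) (mul_mem (mul_mem ?_ hU) hV))
  exact mul_mem (A.algebraMap_mem β) (pow_mem (hx _ (Or.inl rfl)) 2)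

variable (b : K) {x : ℕ × ℕ → K}

theorem discreteLiouvilleClosedForm_boundary (h0 : x (0, 0) ≠ 0) (p : ℕ × ℕ)
    (hp : p.1 = 0 ∨ p.2 = 0) : discreteLiouvilleClosedForm b x p = x p := by
  obtain ⟨l, m⟩ := p
  rcases hp with rfl | rfl <;>
    simp only [discreteLiouvilleClosedForm, sumInvConsecutiveProducts, Finset.sum_range_zero,
      mul_zero, zero_mul, add_zero, mul_one] <;> field_simp

theorem isDiscreteLiouvilleSol_closedForm (hx : ∀ p : ℕ × ℕ, p.1 = 0 ∨ p.2 = 0 → x p ≠ 0) :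
    IsDiscreteLiouvilleSol b (discreteLiouvilleClosedForm b x) := by
  intro l m
  have ha : x (l, 0) ≠ 0 := hx _ (Or.inr rfl)
  have ha' : x (l + 1, 0) ≠ 0 := hx _ (Or.inr rfl)
  have hc : x (0, m) ≠ 0 := hx _ (Or.inl rfl)
  have hc' : x (0, m + 1) ≠ 0 := hx _ (Or.inl rfl)
  have h0 : x (0, 0) ≠ 0 := hx _ (Or.inl rfl)
  simp only [discreteLiouvilleClosedForm, sumInvConsecutiveProducts, Finset.sum_range_succ]
  field_simp
  ring

end ClosedForm

theorem laurent_property_discrete_liouville_general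
    (k : Type*) [Field k] (β : k)
    (x : ℕ × ℕ → FractionRing (MvPolynomial (ℕ × ℕ) k))
    (f : ℕ × ℕ → FractionRing (MvPolynomial (ℕ × ℕ) k))
    (hinit : ∀ p : ℕ × ℕ, p.1 = 0 ∨ p.2 = 0 → f p = x p)
    (hne : ∀ p, f p ≠ 0)
    (hrec : ∀ l m : ℕ, f (l + 1, m + 1) * f (l, m)
      = f (l + 1, m) * f (l, m + 1) + algebraMap (MvPolynomial (ℕ × ℕ) k) _ (C β)) :
    ∀ p : ℕ × ℕ, f p ∈ Algebra.adjoin k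
      {z : FractionRing (MvPolynomial (ℕ × ℕ) k) |
        ∃ q : ℕ × ℕ, (q.1 = 0 ∨ q.2 = 0) ∧ (z = x q ∨ z = (x q)⁻¹)} := by
  have hβ : algebraMap (MvPolynomial (ℕ × ℕ) k) (FractionRing (MvPolynomial (ℕ × ℕ) k)) (C β)
      = algebraMap k _ β := by
    rw [← algebraMap_eq, ← IsScalarTower.algebraMap_apply]
  have hx : ∀ p : ℕ × ℕ, p.1 = 0 ∨ p.2 = 0 → x p ≠ 0 :=
    fun p hp => hinit p hp ▸ hne p
  have hf : f = discreteLiouvilleClosedForm (algebraMap k _ β) x := by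
    refine IsDiscreteLiouvilleSol.eq_of_eqOn_boundary (hβ ▸ hrec)
      (isDiscreteLiouvilleSol_closedForm _ hx) hne fun p hp => ?_
    rw [hinit p hp, discreteLiouvilleClosedForm_boundary _ (hx _ (Or.inl rfl)) p hp]
  exact hf ▸ discreteLiouvilleClosedForm_mem_adjoin β x

/-- The discrete Liouville lattice equation
`f (l, m) = (f (l, m-1) * f (l-1, m) + β) / f (l-1, m-1)`
with initial data `f (l, 0) = X (l, 0)` and `f (0, m) = X (0, m)` has the Laurent
property: every `f (l, m)` is a Laurent polynomial in the boundary initial values,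
i.e. lies in the subalgebra of the rational function field generated by the boundary
variables and their inverses. -/
theorem laurent_property_discrete_liouville
    (k : Type*) [Field k] (β : k) (hβ : β ≠ 0)
    (x : ℕ × ℕ → FractionRing (MvPolynomial (ℕ × ℕ) k))
    (hx : ∀ p, x p = algebraMap (MvPolynomial (ℕ × ℕ) k) _ (X p))
    (f : ℕ × ℕ → FractionRing (MvPolynomial (ℕ × ℕ) k))
    (hinit : ∀ p : ℕ × ℕ, p.1 = 0 ∨ p.2 = 0 → f p = x p)
    (hne : ∀ p, f p ≠ 0)
    (hrec : ∀ l m : ℕ, f (l + 1, m + 1) * f (l, m)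
      = f (l + 1, m) * f (l, m + 1) + algebraMap (MvPolynomial (ℕ × ℕ) k) _ (C β)) :
    ∀ p : ℕ × ℕ, f p ∈ Algebra.adjoin k
      {z : FractionRing (MvPolynomial (ℕ × ℕ) k) |
        ∃ q : ℕ × ℕ, (q.1 = 0 ∨ q.2 = 0) ∧ (z = x q ∨ z = (x q)⁻¹)} :=
  laurent_property_discrete_liouville_general k β x f hinit hne hrec
end

section
/- Gauge transformations preserve the Laurent property of discrete bilinear initial value problems: if the problem with coefficients α⁽ⁱ⁾_h has the Laurent property and φ : L → k^× is any function, then the problem with gauge-transformed coefficients α̃⁽ⁱ⁾_h = α⁽ⁱ⁾_h φ_h φ_{h+w}/(φ_{h+vᵢ} φ_{h+uᵢ}) also has the Laurent property, with iterates related by f̃_h = φ_h · f_h|_{X_{h₀} ↦ X̃_{h₀}/φ_{h₀}}. -/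
open MvPolynomial

/-- A good domain for a discrete bilinear equation with shift vectors `v i, u i`. -/
def IsGoodDomain {L : Type*} [AddCommGroup L] {n : ℕ} (v u : Fin n → L)
    (H : Set L) : Prop :=
  H.Nonempty ∧
  (∀ h ∈ H, {g ∈ H | ∃ a b : Fin n → ℕ,
      g = h + (∑ i, a i • v i) + ∑ i, b i • u i}.Finite) ∧
  (∀ h ∈ H, ∀ a b : Fin n → ℕ, h - (∑ i, a i • v i) - (∑ i, b i • u i) ∈ H)

/-- Gauge transformations preserve the Laurent property: if the
bilinear initial value problem with coefficients `α i h` has the Laurent property and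
`φ : L → kˣ` is any gauge function, then `g h := φ h * f h` solves the problem with the
gauge-transformed coefficients `α i h * φ h * φ (h+w) / (φ (h+vᵢ) * φ (h+uᵢ))`
(and initial values `φ h₀ * X h₀`), and every `g h` is again a Laurent polynomial in
the initial values. -/
theorem gauge_transformation_preserves_laurent_property
    (k : Type*) [Field k] (L : Type*) [AddCommGroup L]
    [Module.Free ℤ L] [Module.Finite ℤ L]
    (n : ℕ) (v u : Fin n → L) (w : L) (hw : ∀ i, v i + u i = w)
    (α : Fin n → L → k) (hα : ∀ i h, α i h ≠ 0)
    (H H₀ : Set L) (hgood : IsGoodDomain v u H)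
    (hH₀ : H₀ = {h ∈ H | h + w ∉ H})
    (x : L → FractionRing (MvPolynomial L k))
    (hx : ∀ h, x h = algebraMap (MvPolynomial L k) _ (X h))
    (cst : k → FractionRing (MvPolynomial L k))
    (hcst : ∀ c, cst c = algebraMap (MvPolynomial L k) _ (C c))
    (f : L → FractionRing (MvPolynomial L k))
    (hinit : ∀ h ∈ H₀, f h = x h)
    (hne : ∀ h ∈ H, f h ≠ 0)
    (hrec : ∀ h ∈ H, h ∉ H₀ →
      f h * f (h + w) = ∑ i, cst (α i h) * f (h + v i) * f (h + u i))
    (hL : ∀ h ∈ H, f h ∈ Algebra.adjoin k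
      {z : FractionRing (MvPolynomial L k) | ∃ h₀ ∈ H₀, z = x h₀ ∨ z = (x h₀)⁻¹})
    (φ : L → kˣ)
    (g : L → FractionRing (MvPolynomial L k))
    (hg : ∀ h, g h = cst (φ h : k) * f h) :
    (∀ h ∈ H₀, g h = cst (φ h : k) * x h) ∧
    (∀ h ∈ H, h ∉ H₀ →
      g h * g (h + w) = ∑ i, cst (α i h * (φ h : k) * (φ (h + w) : k)
          / ((φ (h + v i) : k) * (φ (h + u i) : k)))
        * g (h + v i) * g (h + u i)) ∧
    (∀ h ∈ H, g h ∈ Algebra.adjoin k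
      {z : FractionRing (MvPolynomial L k) | ∃ h₀ ∈ H₀, z = x h₀ ∨ z = (x h₀)⁻¹}) := by
  have hmul : ∀ a b : k, cst (a * b) = cst a * cst b := by
    intro a b; simp [hcst, map_mul]
  refine ⟨fun h hh => by rw [hg, hinit h hh], ?_, ?_⟩
  · intro h hh hh0
    have key : ∀ i : Fin n,
        α i h * (φ h : k) * (φ (h + w) : k)
          / ((φ (h + v i) : k) * (φ (h + u i) : k)) * (φ (h + v i) : k)
          * (φ (h + u i) : k) = α i h * ((φ h : k) * (φ (h + w) : k)) := by
      intro i
      field_simp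
    calc g h * g (h + w)
        = cst ((φ h : k) * (φ (h + w) : k)) * (f h * f (h + w)) := by
          rw [hg, hg, hmul]; ring
      _ = ∑ i, cst (α i h * (φ h : k) * (φ (h + w) : k)
          / ((φ (h + v i) : k) * (φ (h + u i) : k)))
          * g (h + v i) * g (h + u i) := by
          rw [hrec h hh hh0, Finset.mul_sum]
          refine Finset.sum_congr rfl fun i _ => ?_
          rw [hg, hg]
          rw [show cst (α i h * (φ h : k) * (φ (h + w) : k)
            / ((φ (h + v i) : k) * (φ (h + u i) : k)))
            * (cst (φ (h + v i) : k) * f (h + v i)) * (cst (φ (h + u i) : k) * f (h + u i))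
            = cst (α i h * (φ h : k) * (φ (h + w) : k)
            / ((φ (h + v i) : k) * (φ (h + u i) : k))) * cst (φ (h + v i) : k)
            * cst (φ (h + u i) : k) * (f (h + v i) * f (h + u i)) by ring,
            ← hmul, ← hmul, key i]
          simp only [hmul]
          ring
  · intro h hh
    rw [hg h]
    have hc : cst (φ h : k) ∈ Algebra.adjoin k
        {z : FractionRing (MvPolynomial L k) | ∃ h₀ ∈ H₀, z = x h₀ ∨ z = (x h₀)⁻¹} := by
      rw [hcst]
      have : (algebraMap (MvPolynomial L k) (FractionRing (MvPolynomial L k))) (C (φ h : k))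
          = algebraMap k (FractionRing (MvPolynomial L k)) (φ h : k) := by
        rw [IsScalarTower.algebraMap_apply k (MvPolynomial L k)]
        rfl
      rw [this]
      exact Subalgebra.algebraMap_mem _ _
    exact mul_mem hc (hL h hh)
end

section
/- If the coefficients of the nonautonomous Hirota–Miwa equation satisfy α_h α_{h+w} β_{h+v₁} β_{h+u₁} = β_h β_{h+w} α_{h+v₂} α_{h+u₂} for all h ∈ ℤ³, then there exists a nowhere-vanishing gauge function φ : ℤ³ → k^× transforming the equation into the autonomous equation with any prescribed nonzero constant coefficients α̃, β̃; i.e. φ_h φ_{h+w}/(φ_{h+v₁} φ_{h+u₁}) = α̃/α_h and φ_h φ_{h+w}/(φ_{h+v₂} φ_{h+u₂}) = β̃/β_h for all h. -/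
/-!
Write the gauge additively, `L = log φ` with values in `Additive kˣ`. The two gauge equations
become `Δ_[v₁] Δ_[u₁] L = a` and `Δ_[v₂] Δ_[u₂] L = b`, and the hypothesis on `α, β` is exactly
the compatibility `Δ_[v₂] Δ_[u₂] a = Δ_[v₁] Δ_[u₁] b`. If a linear form `π` satisfies `π v = 1`,
then `Δ_[v]` can be inverted by summing along `v`, and the primitive inherits every invariance
`Δ_[u] f = 0` with `π u = 0`. So one first solves the first equation. The defect of the second
equation then lies in `ker (Δ_[v₁] Δ_[u₁]) = ker Δ_[v₁] + ker Δ_[u₁]`, and each summand is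
reached by `Δ_[v₂] Δ_[u₂]` from inside the same kernel, so adding these preimages corrects the
defect.
-/

open fwdDiff fwdDiff_aux

noncomputable section

variable {Λ M : Type*} [AddCommGroup Λ] [AddCommGroup M]

def intPrimitive (g : ℤ → M) (n : ℤ) : M :=
  ∑ m ∈ Finset.Ico 0 n, g m - ∑ m ∈ Finset.Ico n 0, g m

lemma intPrimitive_add_one (g : ℤ → M) (n : ℤ) :
    intPrimitive g (n + 1) = intPrimitive g n + g n := by
  unfold intPrimitive
  rcases le_or_gt 0 n with hn | hn
  · rw [← Finset.insert_Ico_right_eq_Ico_add_one hn, Finset.sum_insert (by simp),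
      Finset.Ico_eq_empty_of_le hn, Finset.Ico_eq_empty_of_le (by omega : (0 : ℤ) ≤ n + 1)]
    abel
  · rw [← Finset.insert_Ico_add_one_left_eq_Ico hn, Finset.sum_insert (by simp),
      Finset.Ico_eq_empty_of_le hn.le, Finset.Ico_eq_empty_of_le (by omega : n + 1 ≤ 0)]
    abel

/-- Sums `f` along the line `x + ℤ v`, starting from its point `x - π x • v` in `ker π`. -/
def primitiveAlong (π : Λ →+ ℤ) (v : Λ) (f : Λ → M) (x : Λ) : M :=
  intPrimitive (fun n : ℤ => f (x - π x • v + n • v)) (π x)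

lemma fwdDiff_primitiveAlong {π : Λ →+ ℤ} {v : Λ} (hv : π v = 1) (f : Λ → M) :
    Δ_[v] (primitiveAlong π v f) = f := by
  ext x
  have hbase : x + v - (π x + 1) • v = x - π x • v := by rw [add_smul, one_smul]; abel
  simp only [fwdDiff, primitiveAlong, map_add, hv, hbase, intPrimitive_add_one, sub_add_cancel,
    add_sub_cancel_left]

lemma fwdDiff_primitiveAlong_eq_zero {π : Λ →+ ℤ} {v u : Λ} (hu : π u = 0) {f : Λ → M}
    (hf : Δ_[u] f = 0) : Δ_[u] (primitiveAlong π v f) = 0 := by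
  ext x
  have hf' : ∀ y, f (y + u) = f y := fun y => sub_eq_zero.mp (congrFun hf y)
  simp only [fwdDiff, primitiveAlong, map_add, hu, add_zero, Pi.zero_apply, sub_eq_zero]
  congr 1
  ext n
  rw [add_sub_right_comm, add_right_comm, hf']

lemma fwdDiff_surjective {π : Λ →+ ℤ} {v : Λ} (hv : π v = 1) :
    Function.Surjective (Δ_[v] : (Λ → M) → Λ → M) :=
  fun f => ⟨primitiveAlong π v f, fwdDiff_primitiveAlong hv f⟩

lemma exists_fwdDiff_eq_of_fwdDiff_eq_zero {π : Λ →+ ℤ} {v u : Λ} (hv : π v = 1) (hu : π u = 0)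
    {f : Λ → M} (hf : Δ_[u] f = 0) : ∃ F, Δ_[u] F = 0 ∧ Δ_[v] F = f :=
  ⟨primitiveAlong π v f, fwdDiff_primitiveAlong_eq_zero hu hf, fwdDiff_primitiveAlong hv f⟩

lemma exists_fwdDiff_fwdDiff_eq_of_fwdDiff_eq_zero {π σ : Λ →+ ℤ} {v v' u : Λ}
    (hv : π v = 1) (hu : π u = 0) (hv' : σ v' = 1) (hu' : σ u = 0)
    {f : Λ → M} (hf : Δ_[u] f = 0) : ∃ F, Δ_[u] F = 0 ∧ Δ_[v] (Δ_[v'] F) = f := by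
  obtain ⟨F₁, hF₁, rfl⟩ := exists_fwdDiff_eq_of_fwdDiff_eq_zero hv hu hf
  obtain ⟨F, hF, rfl⟩ := exists_fwdDiff_eq_of_fwdDiff_eq_zero hv' hu' hF₁
  exact ⟨F, hF, rfl⟩

lemma fwdDiff_fwdDiff_apply (v u : Λ) (f : Λ → M) (x : Λ) :
    Δ_[v] (Δ_[u] f) x = f (x + (v + u)) - f (x + v) - f (x + u) + f x := by
  simp only [fwdDiff, add_assoc]
  abel

lemma commute_fwdDiffₗ (a b : Λ) : Commute (fwdDiffₗ Λ M a) (fwdDiffₗ Λ M b) :=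
  LinearMap.ext fun f => funext fun x => by
    show Δ_[a] (Δ_[b] f) x = Δ_[b] (Δ_[a] f) x
    rw [fwdDiff_fwdDiff_apply, fwdDiff_fwdDiff_apply, add_comm a b]
    abel

end

section Compatibility

variable {R X : Type*} [Semiring R] [AddCommGroup X] [Module R X]

lemma Module.End.exists_add_of_apply_apply_eq_zero {P Q : Module.End R X}
    (hQ : ∀ f, P f = 0 → ∃ F, P F = 0 ∧ Q F = f) {x : X} (hx : P (Q x) = 0) :
    ∃ f g, P f = 0 ∧ Q g = 0 ∧ f + g = x := by
  obtain ⟨f, hf, hQf⟩ := hQ (Q x) hx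
  exact ⟨f, x - f, hf, by rw [map_sub, hQf, sub_self], add_sub_cancel f x⟩

theorem Module.End.exists_apply_apply_eq_and_apply_eq {P Q S : Module.End R X}
    (hPQ : Commute P Q) (hPQS : Commute (P * Q) S)
    (hP : Function.Surjective P) (hQ : Function.Surjective Q)
    (hQ_kerP : ∀ f, P f = 0 → ∃ F, P F = 0 ∧ Q F = f)
    (hS_kerP : ∀ f, P f = 0 → ∃ F, P F = 0 ∧ S F = f)
    (hS_kerQ : ∀ g, Q g = 0 → ∃ G, Q G = 0 ∧ S G = g)
    {a b : X} (hab : S a = P (Q b)) : ∃ L, P (Q L) = a ∧ S L = b := by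
  obtain ⟨L₀, hL₀⟩ : ∃ L₀, P (Q L₀) = a := by
    obtain ⟨y, rfl⟩ := hP a
    obtain ⟨L₀, rfl⟩ := hQ y
    exact ⟨L₀, rfl⟩
  have hker : P (Q (b - S L₀)) = 0 := by
    have hPQS_L₀ : P (Q (S L₀)) = S (P (Q L₀)) := LinearMap.congr_fun hPQS.eq L₀
    rw [map_sub, map_sub, hPQS_L₀, hL₀, hab, sub_self]
  obtain ⟨f, g, hf, hg, hfg⟩ := exists_add_of_apply_apply_eq_zero hQ_kerP hker
  obtain ⟨F, hPF, hSF⟩ := hS_kerP f hf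
  obtain ⟨G, hQG, hSG⟩ := hS_kerQ g hg
  refine ⟨L₀ + F + G, ?_, ?_⟩
  · have hPQF : P (Q F) = Q (P F) := LinearMap.congr_fun hPQ.eq F
    rw [hPF, map_zero] at hPQF
    rw [map_add, map_add, map_add, map_add, hL₀, hPQF, hQG, map_zero, add_zero, add_zero]
  · rw [map_add, map_add, hSF, hSG, add_assoc, hfg, add_sub_cancel]

end Compatibility

def linearForm (a b c : ℤ) : ℤ × ℤ × ℤ →+ ℤ where
  toFun h := a * h.1 + b * h.2.1 + c * h.2.2
  map_zero' := by simp
  map_add' x y := by simp only [Prod.fst_add, Prod.snd_add]; ring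

theorem exists_fwdDiff_fwdDiff_eq_hirotaMiwa {M : Type*} [AddCommGroup M] (a b : ℤ × ℤ × ℤ → M)
    (hab : Δ_[(0, 0, -1)] (Δ_[(-1, 1, 0)] a) = Δ_[(-1, 0, 0)] (Δ_[(0, 1, -1)] b)) :
    ∃ L, Δ_[(-1, 0, 0)] (Δ_[(0, 1, -1)] L) = a ∧ Δ_[(0, 0, -1)] (Δ_[(-1, 1, 0)] L) = b := by
  have hcomm := commute_fwdDiffₗ (M := M) (Λ := ℤ × ℤ × ℤ)
  -- Each linear form is `1` on the direction summed along and `0` on the invariance to keep.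
  refine Module.End.exists_apply_apply_eq_and_apply_eq
    (P := fwdDiffₗ _ M (-1, 0, 0)) (Q := fwdDiffₗ _ M (0, 1, -1))
    (S := fwdDiffₗ _ M (0, 0, -1) * fwdDiffₗ _ M (-1, 1, 0))
    (hcomm _ _) (((hcomm _ _).mul_right (hcomm _ _)).mul_left
      ((hcomm _ _).mul_right (hcomm _ _)))
    (fwdDiff_surjective (π := linearForm (-1) 0 0) (by simp [linearForm]))
    (fwdDiff_surjective (π := linearForm 0 1 0) (by simp [linearForm]))
    (fun _ hf => exists_fwdDiff_eq_of_fwdDiff_eq_zero (π := linearForm 0 1 0)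
      (by simp [linearForm]) (by simp [linearForm]) hf)
    (fun _ hf => exists_fwdDiff_fwdDiff_eq_of_fwdDiff_eq_zero
      (π := linearForm 0 0 (-1)) (σ := linearForm 0 1 0) (by simp [linearForm])
      (by simp [linearForm]) (by simp [linearForm]) (by simp [linearForm]) hf)
    (fun _ hg => exists_fwdDiff_fwdDiff_eq_of_fwdDiff_eq_zero
      (π := linearForm 0 (-1) (-1)) (σ := linearForm (-1) 0 0) (by simp [linearForm])
      (by simp [linearForm]) (by simp [linearForm]) (by simp [linearForm]) hg)
    hab

section Gauge

variable {Λ G : Type*} [AddCommGroup Λ] [CommGroup G]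

lemma mul_eq_mul_of_fwdDiff_fwdDiff_eq {v u : Λ} {c : Λ → G} {c' : G} {L : Λ → Additive G}
    (hL : Δ_[v] (Δ_[u] L) = fun x => Additive.ofMul c' - Additive.ofMul (c x)) (x : Λ) :
    c x * ((L x).toMul * (L (x + (v + u))).toMul)
      = c' * ((L (x + v)).toMul * (L (x + u)).toMul) := by
  apply Additive.ofMul.injective
  have hx := congrFun hL x
  rw [fwdDiff_fwdDiff_apply] at hx
  simp only [ofMul_mul, ofMul_toMul]
  rw [← sub_eq_zero] at hx ⊢
  rw [← hx]
  abel

theorem exists_gauge_hirotaMiwa (α β : ℤ × ℤ × ℤ → G)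
    (hcond : ∀ h, α h * α (h + (-1, 1, -1)) * β (h + (-1, 0, 0)) * β (h + (0, 1, -1))
      = β h * β (h + (-1, 1, -1)) * α (h + (0, 0, -1)) * α (h + (-1, 1, 0)))
    (α' β' : G) :
    ∃ φ : ℤ × ℤ × ℤ → G,
      (∀ h, α h * (φ h * φ (h + (-1, 1, -1)))
        = α' * (φ (h + (-1, 0, 0)) * φ (h + (0, 1, -1)))) ∧
      (∀ h, β h * (φ h * φ (h + (-1, 1, -1)))
        = β' * (φ (h + (0, 0, -1)) * φ (h + (-1, 1, 0)))) := by
  have hcompat : Δ_[(0, 0, -1)] (Δ_[(-1, 1, 0)] fun h => Additive.ofMul α' - Additive.ofMul (α h))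
      = Δ_[(-1, 0, 0)] (Δ_[(0, 1, -1)] fun h => Additive.ofMul β' - Additive.ofMul (β h)) := by
    funext h
    have hh := congrArg Additive.ofMul (hcond h)
    simp only [ofMul_mul] at hh
    simp only [fwdDiff_fwdDiff_apply, Prod.mk_add_mk, add_zero, zero_add]
    rw [← sub_eq_zero] at hh
    rw [eq_comm, ← sub_eq_zero, ← hh]
    abel
  obtain ⟨L, hα, hβ⟩ := exists_fwdDiff_fwdDiff_eq_hirotaMiwa _ _ hcompat
  exact ⟨fun h => (L h).toMul, mul_eq_mul_of_fwdDiff_fwdDiff_eq hα,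
    mul_eq_mul_of_fwdDiff_fwdDiff_eq hβ⟩

end Gauge

/-- If the coefficients of the nonautonomous Hirota–Miwa equation
satisfy `α h * α (h+w) * β (h+v₁) * β (h+u₁) = β h * β (h+w) * α (h+v₂) * α (h+u₂)`
for all `h ∈ ℤ³`, then for any prescribed nonzero constants `α̃, β̃` there is a
nowhere-vanishing gauge `φ : ℤ³ → kˣ` with
`φ h * φ (h+w) / (φ (h+v₁) * φ (h+u₁)) = α̃ / α h` and
`φ h * φ (h+w) / (φ (h+v₂) * φ (h+u₂)) = β̃ / β h` for all `h`. -/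
theorem gauge_to_autonomous_hirota_miwa
    (k : Type*) [Field k]
    (v₁ u₁ v₂ u₂ w : ℤ × ℤ × ℤ)
    (hv₁ : v₁ = (-1, 0, 0)) (hu₁ : u₁ = (0, 1, -1))
    (hv₂ : v₂ = (0, 0, -1)) (hu₂ : u₂ = (-1, 1, 0))
    (hw : w = (-1, 1, -1))
    (α β : ℤ × ℤ × ℤ → kˣ)
    (hcond : ∀ h, α h * α (h + w) * β (h + v₁) * β (h + u₁)
      = β h * β (h + w) * α (h + v₂) * α (h + u₂))
    (α' β' : kˣ) :
    ∃ φ : ℤ × ℤ × ℤ → kˣ,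
      (∀ h, α h * (φ h * φ (h + w)) = α' * (φ (h + v₁) * φ (h + u₁))) ∧
      (∀ h, β h * (φ h * φ (h + w)) = β' * (φ (h + v₂) * φ (h + u₂))) := by
  subst hv₁ hu₁ hv₂ hu₂ hw
  exact exists_gauge_hirotaMiwa α β hcond α' β'
end

section
/- If f and g are polynomials over ℝ in variables z₁, z₂, … that take positive values whenever all variables are assigned positive real values, and if f + g is divisible by z_j, then both f and g are divisible by z_j. -/
open MvPolynomial

/-- A real multivariate polynomial vanishing on the positive orthant is zero. -/
lemma mv_eq_zero_of_pos_eval : ∀ (N : ℕ) (p : MvPolynomial (Fin N) ℝ),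
    (∀ a : Fin N → ℝ, (∀ i, 0 < a i) → eval a p = 0) → p = 0 := by
  intro N
  induction N with
  | zero =>
    intro p h
    apply MvPolynomial.funext
    intro a
    simpa using h a (fun i => i.elim0)
  | succ n ih =>
    intro p h
    have key : finSuccEquiv ℝ n p = 0 := by
      apply Polynomial.ext
      intro k
      rw [Polynomial.coeff_zero]
      apply ih
      intro s hs
      have h1 : Polynomial.map (eval s) (finSuccEquiv ℝ n p) = 0 := by
        apply Polynomial.eq_zero_of_infinite_isRoot
        apply Set.Infinite.mono (s := Set.Ioi (0:ℝ)) ?_ (Set.Ioi_infinite 0)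
        intro y hy
        simp only [Set.mem_setOf_eq, Polynomial.IsRoot]
        rw [← eval_eq_eval_mv_eval']
        exact h _ (fun i => Fin.cases hy hs i)
      have h2 := congrArg (fun q => Polynomial.coeff q k) h1
      simpa [Polynomial.coeff_map] using h2
    have := (finSuccEquiv ℝ n).injective
    apply this
    simpa using key

lemma X_dvd_sub_bind₁ (N : ℕ) (j : Fin N) (p : MvPolynomial (Fin N) ℝ) :
    X j ∣ p - bind₁ (Function.update X j (0 : MvPolynomial (Fin N) ℝ)) p := by
  induction p using MvPolynomial.induction_on with
  | C a => simp
  | add p q hp hq =>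
    have h := dvd_add hp hq
    rw [map_add]
    convert h using 1
    ring
  | mul_X p i hp =>
    rw [map_mul, bind₁_X_right, Function.update_apply]
    by_cases hij : i = j
    · subst hij
      rw [if_pos rfl, mul_zero, sub_zero]
      exact ⟨p, mul_comm _ _⟩
    · rw [if_neg hij]
      have h2 : p * X i - bind₁ (Function.update X j 0) p * X i
          = (p - bind₁ (Function.update X j 0) p) * X i := by ring
      rw [h2]
      exact hp.mul_right _

lemma eval_bind₁_update (N : ℕ) (j : Fin N) (a : Fin N → ℝ) (p : MvPolynomial (Fin N) ℝ) :
    eval a (bind₁ (Function.update X j (0 : MvPolynomial (Fin N) ℝ)) p)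
      = eval (Function.update a j 0) p := by
  have h : eval a (bind₁ (Function.update X j (0 : MvPolynomial (Fin N) ℝ)) p)
      = eval (fun i => eval a (Function.update X j (0 : MvPolynomial (Fin N) ℝ) i)) p :=
    eval₂Hom_bind₁ _ _ _ _
  have hfun : (fun i => eval a (Function.update X j (0 : MvPolynomial (Fin N) ℝ) i))
      = Function.update a j 0 := by
    funext i
    rcases eq_or_ne i j with rfl | hij
    · simp [Function.update_self]
    · simp [Function.update_of_ne hij]
  rw [h, hfun]

/-- For positive `a`, the value of `p` at `a` with `j`-th coordinate set to `0`
is nonnegative, if `p` is positive on the positive orthant. -/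
lemma nonneg_update_zero (N : ℕ) (j : Fin N) (p : MvPolynomial (Fin N) ℝ)
    (hp : ∀ a : Fin N → ℝ, (∀ i, 0 < a i) → 0 < eval a p)
    (a : Fin N → ℝ) (ha : ∀ i, 0 < a i) :
    0 ≤ eval (Function.update a j 0) p := by
  have hcont : Continuous fun t : ℝ => eval (Function.update a j t) p :=
    (MvPolynomial.continuous_eval p).comp (continuous_const.update j continuous_id)
  have htend : Filter.Tendsto (fun t : ℝ => eval (Function.update a j t) p)
      (nhdsWithin 0 (Set.Ioi 0)) (nhds (eval (Function.update a j 0) p)) :=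
    (hcont.tendsto 0).mono_left nhdsWithin_le_nhds
  refine ge_of_tendsto htend ?_
  filter_upwards [self_mem_nhdsWithin] with t ht
  refine le_of_lt (hp _ fun i => ?_)
  rcases eq_or_ne i j with rfl | hij
  · simpa [Function.update_self] using ht
  · simpa [Function.update_of_ne hij] using ha i

/-- If `f` and `g` are real polynomials that take positive values
whenever all variables are positive, and `z j` divides `f + g`, then `z j` divides
both `f` and `g`. -/
theorem variable_divides_of_divides_sum_of_positive
    (N : ℕ) (f g : MvPolynomial (Fin N) ℝ)
    (hf : ∀ a : Fin N → ℝ, (∀ i, 0 < a i) → 0 < eval a f)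
    (hg : ∀ a : Fin N → ℝ, (∀ i, 0 < a i) → 0 < eval a g)
    (j : Fin N) (hdvd : X j ∣ f + g) :
    X j ∣ f ∧ X j ∣ g := by
  set φ : MvPolynomial (Fin N) ℝ →ₐ[ℝ] MvPolynomial (Fin N) ℝ :=
    bind₁ (Function.update X j (0 : MvPolynomial (Fin N) ℝ)) with hφ
  have hsum : φ f + φ g = 0 := by
    obtain ⟨h, hh⟩ := hdvd
    have : φ (f + g) = 0 := by
      rw [hh, map_mul, hφ, bind₁_X_right, Function.update_self, zero_mul]
    rw [← map_add]
    exact this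
  have hzero : ∀ a : Fin N → ℝ, (∀ i, 0 < a i) → eval a (φ f) = 0 := by
    intro a ha
    have h1 : 0 ≤ eval a (φ f) := by
      rw [hφ, eval_bind₁_update]; exact nonneg_update_zero N j f hf a ha
    have h2 : 0 ≤ eval a (φ g) := by
      rw [hφ, eval_bind₁_update]; exact nonneg_update_zero N j g hg a ha
    have h3 : eval a (φ f) + eval a (φ g) = 0 := by
      rw [← map_add, hsum, map_zero]
    linarith
  have hzg : ∀ a : Fin N → ℝ, (∀ i, 0 < a i) → eval a (φ g) = 0 := by
    intro a ha
    have := hzero a ha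
    have h3 : eval a (φ f) + eval a (φ g) = 0 := by
      rw [← map_add, hsum, map_zero]
    linarith
  have hφf : φ f = 0 := mv_eq_zero_of_pos_eval N _ hzero
  have hφg : φ g = 0 := mv_eq_zero_of_pos_eval N _ hzg
  constructor
  · have := X_dvd_sub_bind₁ N j f
    rwa [← hφ, hφf, sub_zero] at this
  · have := X_dvd_sub_bind₁ N j g
    rwa [← hφ, hφg, sub_zero] at this
end

section
/- For the recurrence f_m = (α_m f_{m-1}² + β_m)/f_{m-2} with positive real parameters satisfying α_m α_{m-2} β_{m-1}² = β_m β_{m-2}, writing each Laurent-polynomial iterate as f_m = p_m/q_m with p_m a polynomial coprime to the monomial q_m, one has q_m = X^{m-1} Y^{m-2} for all m ≥ 2; consequently deg f_m = 2m − 2 and the algebraic entropy lim_{m→∞} (1/m) log deg f_m is 0. -/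
open MvPolynomial

lemma coeff_X0sq_mul' (p : MvPolynomial (Fin 2) ℝ) (n : ℕ) :
    coeff (Finsupp.single (1 : Fin 2) n) (X (0 : Fin 2) ^ 2 * p) = 0 := by
  rw [X_pow_eq_monomial, coeff_monomial_mul']
  rw [if_neg]
  intro h
  have := h (0 : Fin 2)
  simp [Finsupp.single_apply] at this

lemma coeff_X1sq_mul' (p : MvPolynomial (Fin 2) ℝ) (n : ℕ) :
    coeff (Finsupp.single (1 : Fin 2) (n + 2)) (X (1 : Fin 2) ^ 2 * p) =
      coeff (Finsupp.single (1 : Fin 2) n) p := by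
  rw [X_pow_eq_monomial, coeff_monomial_mul']
  rw [if_pos]
  · rw [one_mul]
    congr 1
    ext i
    by_cases h : (1 : Fin 2) = i
    · subst h; simp [Finsupp.single_apply]
    · simp [Finsupp.single_apply, h]
  · intro i
    by_cases h : (1 : Fin 2) = i
    · subst h; simp [Finsupp.single_apply]
    · simp [Finsupp.single_apply, h]

lemma single_sumsup' (n : ℕ) :
    ∑ i ∈ (Finsupp.single (1 : Fin 2) n).support, (Finsupp.single (1 : Fin 2) n) i = n := by
  rcases Nat.eq_zero_or_pos n with h0 | h0
  · simp [h0]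
  · rw [Finsupp.support_single_ne_zero _ (by omega)]
    simp

lemma coeff_beyond' {p : MvPolynomial (Fin 2) ℝ} {d n : ℕ} (h : p.totalDegree ≤ d) (hn : d < n) :
    coeff (Finsupp.single (1 : Fin 2) n) p = 0 := by
  apply coeff_eq_zero_of_totalDegree_lt
  have := single_sumsup' n
  show p.totalDegree < ∑ i ∈ (Finsupp.single (1 : Fin 2) n).support, (Finsupp.single (1 : Fin 2) n) i
  omega

lemma totalDegree_lower' {p : MvPolynomial (Fin 2) ℝ} {n : ℕ}
    (h : coeff (Finsupp.single (1 : Fin 2) n) p ≠ 0) : n ≤ p.totalDegree := by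
  have := le_totalDegree (p := p) (s := Finsupp.single (1 : Fin 2) n) (mem_support_iff.mpr h)
  rwa [show (Finsupp.single (1 : Fin 2) n).sum (fun _ e => e) = n from by
    rw [Finsupp.sum]; exact single_sumsup' n] at this

lemma tendsto_aux' : Filter.Tendsto (fun m : ℕ => Real.log (2 * (m : ℝ) - 2) / m)
      Filter.atTop (nhds 0) := by
  have h1 : (fun x : ℝ => Real.log (2 * x - 2)) =o[Filter.atTop] (fun x : ℝ => x) := by
    have h2 : Filter.Tendsto (fun x : ℝ => 2 * x - 2) Filter.atTop Filter.atTop :=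
      Filter.tendsto_atTop_atTop_of_monotone
        (fun (a : ℝ) (b : ℝ) (hab : a ≤ b) => show 2 * a - 2 ≤ 2 * b - 2 by linarith)
        (fun b => ⟨b / 2 + 1, by linarith⟩)
    have := Real.isLittleO_log_id_atTop.comp_tendsto h2
    refine this.trans_isBigO ?_
    rw [Asymptotics.isBigO_iff]
    refine ⟨2, Filter.eventually_atTop.2 ⟨1, fun x hx => ?_⟩⟩
    simp only [Function.comp, id_eq, Real.norm_eq_abs]
    rw [abs_of_nonneg (by linarith), abs_of_nonneg (by linarith)]
    linarith
  exact h1.tendsto_div_nhds_zero.comp tendsto_natCast_atTop_atTop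

set_option maxHeartbeats 1600000 in
/-- For `f m = (α m * f (m-1)^2 + β m) / f (m-2)` with positive real
parameters satisfying `α m α (m-2) β (m-1)^2 = β m β (m-2)`, each Laurent-polynomial
iterate `f m` (`m ≥ 2`) has denominator exactly `X^(m-1) * Y^(m-2)` (numerator a
polynomial divisible by neither variable, of total degree `2m - 2`, so that
`deg f m = 2m - 2`), and the algebraic entropy `lim (1/m) log (deg f m)` is `0`. -/
theorem denominators_and_zero_entropy_quadratic_recurrence
    (α β : ℕ → ℝ) (hα : ∀ m, 0 < α m) (hβ : ∀ m, 0 < β m)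
    (hcond : ∀ m, α (m + 4) * α (m + 2) * β (m + 3) ^ 2 = β (m + 4) * β (m + 2))
    (x y : FractionRing (MvPolynomial (Fin 2) ℝ))
    (hx : x = algebraMap (MvPolynomial (Fin 2) ℝ) _ (X 0))
    (hy : y = algebraMap (MvPolynomial (Fin 2) ℝ) _ (X 1))
    (f : ℕ → FractionRing (MvPolynomial (Fin 2) ℝ))
    (h0 : f 0 = x) (h1 : f 1 = y)
    (hne : ∀ m, f m ≠ 0)
    (hrec : ∀ m, f (m + 2) * f m
      = algebraMap (MvPolynomial (Fin 2) ℝ) _ (C (α (m + 2))) * f (m + 1) ^ 2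
        + algebraMap (MvPolynomial (Fin 2) ℝ) _ (C (β (m + 2)))) :
    (∀ m, 2 ≤ m → ∃ p : MvPolynomial (Fin 2) ℝ,
      ¬ (X 0 ∣ p) ∧ ¬ (X 1 ∣ p) ∧
      f m * algebraMap (MvPolynomial (Fin 2) ℝ) _ (X 0 ^ (m - 1) * X 1 ^ (m - 2))
        = algebraMap (MvPolynomial (Fin 2) ℝ) _ p ∧
      p.totalDegree = 2 * m - 2) ∧
    Filter.Tendsto (fun m : ℕ => Real.log (2 * (m : ℝ) - 2) / m)
      Filter.atTop (nhds 0) := by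
  set φ := algebraMap (MvPolynomial (Fin 2) ℝ) (FractionRing (MvPolynomial (Fin 2) ℝ)) with hφdef
  -- basic nonvanishing facts
  have φinj : Function.Injective φ := IsFractionRing.injective _ _
  have hφne : ∀ z : MvPolynomial (Fin 2) ℝ, z ≠ 0 → φ z ≠ 0 := by
    intro z hz
    exact (map_ne_zero_iff φ φinj).mpr hz
  have hCne : ∀ r : ℝ, r ≠ 0 → φ (C r) ≠ 0 := by
    intro r hr
    apply hφne
    simp [hr]
  have hf0 : f 0 = φ (X 0) := by rw [h0, hx]
  have hf1 : f 1 = φ (X 1) := by rw [h1, hy]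
  -- the normalizing constants
  set l : ℕ → ℝ := fun m => Nat.casesOn m (Real.sqrt (β 3 / α 3) / β 2)
    (fun k => Real.sqrt (α (k + 2) / β (k + 2))) with hl
  have hlpos : ∀ m, 0 < l m := by
    intro m
    cases m with
    | zero => exact div_pos (Real.sqrt_pos.mpr (div_pos (hβ 3) (hα 3))) (hβ 2)
    | succ k => exact Real.sqrt_pos.mpr (div_pos (hα (k + 2)) (hβ (k + 2)))
  have hlsq : ∀ m, l (m + 1) ^ 2 = α (m + 2) / β (m + 2) := by
    intro m
    show Real.sqrt _ ^ 2 = _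
    exact Real.sq_sqrt (le_of_lt (div_pos (hα (m + 2)) (hβ (m + 2))))
  have keyeq : ∀ m, 0 < l (m + 2) * l m * β (m + 2) →
      (l (m + 2) * l m * β (m + 2)) ^ 2 = 1 → l (m + 2) * l m * β (m + 2) = 1 := by
    intro m h1 h2
    have h3 : (l (m + 2) * l m * β (m + 2) - 1) * (l (m + 2) * l m * β (m + 2) + 1) = 0 := by
      linear_combination h2
    rcases mul_eq_zero.mp h3 with h | h
    · linarith
    · linarith
  have hlb : ∀ m, l (m + 2) * l m * β (m + 2) = 1 := by
    intro m
    have h1 : 0 < l (m + 2) * l m * β (m + 2) :=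
      mul_pos (mul_pos (hlpos (m + 2)) (hlpos m)) (hβ (m + 2))
    refine keyeq m h1 ?_
    cases m with
    | zero =>
      have e2 : l 2 ^ 2 = α 3 / β 3 := hlsq 1
      have e0 : l 0 ^ 2 = β 3 / α 3 / β 2 ^ 2 := by
        show (Real.sqrt (β 3 / α 3) / β 2) ^ 2 = _
        rw [div_pow, Real.sq_sqrt (le_of_lt (div_pos (hβ 3) (hα 3)))]
      show (l 2 * l 0 * β 2) ^ 2 = 1
      rw [mul_pow, mul_pow, e2, e0]
      have b2 := (hβ 2).ne'
      have b3 := (hβ 3).ne'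
      have a3 := (hα 3).ne'
      field_simp
    | succ k =>
      have e2 : l (k + 3) ^ 2 = α (k + 4) / β (k + 4) := hlsq (k + 2)
      have e0 : l (k + 1) ^ 2 = α (k + 2) / β (k + 2) := hlsq k
      show (l (k + 3) * l (k + 1) * β (k + 3)) ^ 2 = 1
      rw [mul_pow, mul_pow, e2, e0]
      have b2 := (hβ (k + 2)).ne'
      have b4 := (hβ (k + 4)).ne'
      field_simp
      linarith [hcond k]
  have hla : ∀ m, l (m + 2) * l m * α (m + 2) = l (m + 1) ^ 2 := by
    intro m
    have h := hlsq m
    have b := (hβ (m + 2)).ne'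
    have h' : l (m + 1) ^ 2 * β (m + 2) = α (m + 2) := by
      rw [h]; field_simp
    linear_combination (-(l (m + 2) * l m)) * h' + l (m + 1) ^ 2 * hlb m
  -- quadratic relation for the normalized sequence
  have hQ : ∀ m, (φ (C (l (m + 2))) * f (m + 2)) * (φ (C (l m)) * f m)
      = (φ (C (l (m + 1))) * f (m + 1)) ^ 2 + 1 := by
    intro m
    have e1 : φ (C (l (m + 2))) * φ (C (l m)) * φ (C (α (m + 2))) = φ (C (l (m + 1))) ^ 2 := by
      rw [← map_mul, ← map_mul, ← C_mul, ← C_mul, hla m, C_pow, map_pow]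
    have e2 : φ (C (l (m + 2))) * φ (C (l m)) * φ (C (β (m + 2))) = 1 := by
      rw [← map_mul, ← map_mul, ← C_mul, ← C_mul, hlb m, C_1, map_one]
    linear_combination (φ (C (l (m + 2))) * φ (C (l m))) * hrec m + (f (m + 1)) ^ 2 * e1 + e2
  -- linear relation
  have hL : ∀ m, (φ (C (l (m + 2))) * f (m + 2) + φ (C (l m)) * f m) * (φ (C (l 1)) * f 1)
      = (φ (C (l 2)) * f 2 + φ (C (l 0)) * f 0) * (φ (C (l (m + 1))) * f (m + 1)) := by
    intro m
    induction m with
    | zero => ring_nf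
    | succ m ih =>
      have hne' : φ (C (l (m + 1))) * f (m + 1) ≠ 0 :=
        mul_ne_zero (hCne _ (hlpos (m + 1)).ne') (hne (m + 1))
      refine mul_right_cancel₀ hne' ?_
      linear_combination (φ (C (l 1)) * f 1) * hQ (m + 1) - (φ (C (l 1)) * f 1) * hQ m
        + (φ (C (l (m + 2))) * f (m + 2)) * ih
  -- the fixed polynomial q with (a2 + a0) * X0 = q
  set q : MvPolynomial (Fin 2) ℝ :=
    C (l 2 * α 2) * X 1 ^ 2 + C (l 2 * β 2) + C (l 0) * X 0 ^ 2 with hqdef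
  have hr0 : f 2 * φ (X 0) = φ (C (α 2)) * φ (X 1) ^ 2 + φ (C (β 2)) := by
    have h := hrec 0
    norm_num at h
    rw [hf0, hf1] at h
    exact h
  have hq : (φ (C (l 2)) * f 2 + φ (C (l 0)) * f 0) * φ (X 0) = φ q := by
    rw [hf0, hqdef]
    simp only [map_add, map_mul, map_pow]
    linear_combination (φ (C (l 2))) * hr0
  have hqdeg : q.totalDegree ≤ 2 := by
    refine le_trans (totalDegree_add _ _) (max_le (le_trans (totalDegree_add _ _) (max_le ?_ ?_)) ?_)
    · exact le_trans (totalDegree_mul _ _) (by rw [totalDegree_C, totalDegree_X_pow])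
    · rw [totalDegree_C]; omega
    · exact le_trans (totalDegree_mul _ _) (by rw [totalDegree_C, totalDegree_X_pow])
  have hqcc : constantCoeff q = l 2 * β 2 := by
    rw [hqdef]
    simp [constantCoeff_C, constantCoeff_X]
  -- the main induction statement
  set S : ℕ → Prop := fun k => ∃ p : MvPolynomial (Fin 2) ℝ,
    f (k + 2) * (φ (X 0) ^ (k + 1) * φ (X 1) ^ k) = φ p ∧
    p.totalDegree ≤ 2 * k + 2 ∧
    0 < constantCoeff p ∧
    0 < coeff (Finsupp.single (1 : Fin 2) (2 * k + 2)) p with hSdef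
  have base0 : S 0 := by
    refine ⟨C (α 2) * X 1 ^ 2 + C (β 2), ?_, ?_, ?_, ?_⟩
    · simp only [pow_one, pow_zero, mul_one, map_add, map_mul, map_pow]
      linear_combination hr0
    · refine le_trans (totalDegree_add _ _) (max_le ?_ ?_)
      · exact le_trans (totalDegree_mul _ _) (by rw [totalDegree_C, totalDegree_X_pow])
      · rw [totalDegree_C]; omega
    · simp only [map_add, map_mul, map_pow, constantCoeff_C, constantCoeff_X]
      simpa using hβ 2
    · rw [coeff_add, coeff_C_mul, coeff_X_pow, if_pos rfl, coeff_C,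
        if_neg (by simp [eq_comm, Finsupp.single_eq_zero])]
      simpa using hα 2
  have base1 : S 1 := by
    have hr1 : f 3 * φ (X 1) = φ (C (α 3)) * f 2 ^ 2 + φ (C (β 3)) := by
      have h := hrec 1
      norm_num at h
      rw [hf1] at h
      exact h
    refine ⟨C (α 3) * (C (α 2) * X 1 ^ 2 + C (β 2)) ^ 2 + C (β 3) * X 0 ^ 2, ?_, ?_, ?_, ?_⟩
    · simp only [pow_one, map_add, map_mul, map_pow]
      linear_combination φ (X 0) ^ 2 * hr1
        + φ (C (α 3)) * (f 2 * φ (X 0) + (φ (C (α 2)) * φ (X 1) ^ 2 + φ (C (β 2)))) * hr0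
    · refine le_trans (totalDegree_add _ _) (max_le ?_ ?_)
      · refine le_trans (totalDegree_mul _ _) ?_
        rw [totalDegree_C, zero_add]
        refine le_trans (totalDegree_pow _ _) ?_
        have h2 : (C (α 2) * X (1 : Fin 2) ^ 2 + C (β 2)).totalDegree ≤ 2 := by
          refine le_trans (totalDegree_add _ _) (max_le ?_ ?_)
          · exact le_trans (totalDegree_mul _ _) (by rw [totalDegree_C, totalDegree_X_pow])
          · rw [totalDegree_C]; omega
        refine le_trans (Nat.mul_le_mul_left 2 h2) (by norm_num)
      · exact le_trans (totalDegree_mul _ _) (by rw [totalDegree_C, totalDegree_X_pow]; omega)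
    · have hcc : constantCoeff (C (α 3) * (C (α 2) * X (1 : Fin 2) ^ 2 + C (β 2)) ^ 2
            + C (β 3) * X (0 : Fin 2) ^ 2) = α 3 * β 2 ^ 2 := by
        simp only [map_add, map_mul, map_pow, constantCoeff_C, constantCoeff_X]
        ring
      rw [hcc]
      exact mul_pos (hα 3) (pow_pos (hβ 2) 2)
    · have hexp : C (α 3) * (C (α 2) * X (1 : Fin 2) ^ 2 + C (β 2)) ^ 2
            + C (β 3) * X (0 : Fin 2) ^ 2
          = C (α 3 * α 2 ^ 2) * X 1 ^ 4 + C (2 * (α 3 * α 2 * β 2)) * X 1 ^ 2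
            + C (α 3 * β 2 ^ 2) + C (β 3) * X 0 ^ 2 := by
        simp only [C_mul, C_pow, map_ofNat]
        ring
      rw [hexp]
      rw [coeff_add, coeff_add, coeff_add, coeff_C_mul, coeff_C_mul, coeff_C_mul,
        coeff_X_pow, coeff_X_pow, coeff_X_pow, coeff_C,
        if_pos (by norm_num), if_neg (by simp [Finsupp.single_eq_single_iff]),
        if_neg (by simp [eq_comm, Finsupp.single_eq_zero]),
        if_neg (by simp [Finsupp.single_eq_single_iff])]
      have := mul_pos (hα 3) (pow_pos (hα 2) 2)
      norm_num
      nlinarith [this]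
  have step : ∀ k, S k → S (k + 1) → S (k + 2) := by
    rintro k ⟨p, hp1, hp2, hp3, hp4⟩ ⟨p', hp1', hp2', hp3', hp4'⟩
    set u := l (k + 3) / (l 1 * l (k + 4)) with hu
    set v := l (k + 2) / l (k + 4) with hv
    have hupos : 0 < u := div_pos (hlpos (k + 3)) (mul_pos (hlpos 1) (hlpos (k + 4)))
    have hvpos : 0 < v := div_pos (hlpos (k + 2)) (hlpos (k + 4))
    refine ⟨C u * (q * p') - C v * (X 0 ^ 2 * (X 1 ^ 2 * p)), ?_, ?_, ?_, ?_⟩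
    · -- the main identity
      have c1s : l 1 * l (k + 4) * u = l (k + 3) := by
        rw [hu]
        field_simp [(hlpos 1).ne', (hlpos (k + 4)).ne']
      have c2s : l 1 * l (k + 4) * v = l 1 * l (k + 2) := by
        rw [hv]
        field_simp [(hlpos (k + 4)).ne']
      have c1 : φ (C (l 1)) * φ (C (l (k + 4))) * φ (C u) = φ (C (l (k + 3))) := by
        rw [← map_mul, ← map_mul, ← C_mul, ← C_mul, c1s]
      have c2 : φ (C (l 1)) * φ (C (l (k + 4))) * φ (C v)
          = φ (C (l 1)) * φ (C (l (k + 2))) := by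
        rw [← map_mul, ← map_mul, ← C_mul, ← C_mul, c2s, C_mul, map_mul]
      have key := hL (k + 2)
      rw [hf0, hf1] at key
      have hq' := hq
      rw [hf0] at hq'
      simp only [show k + 2 + 2 = k + 4 from by omega, show k + 2 + 1 = k + 3 from by omega]
        at key ⊢
      refine mul_left_cancel₀ (show φ (C (l 1)) * φ (C (l (k + 4))) * φ (X 1) ≠ 0 from
        mul_ne_zero (mul_ne_zero (hCne _ (hlpos 1).ne') (hCne _ (hlpos (k + 4)).ne'))
          (hφne _ (X_ne_zero 1))) ?_
      simp only [map_sub, map_mul, map_pow]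
      linear_combination (φ (X 0) ^ (k + 3) * φ (X 1) ^ (k + 2)) * key
        - (φ (C (l 1)) * φ (C (l (k + 2))) * φ (X 1) ^ 3 * φ (X 0) ^ 2) * hp1
        + (φ (C (l (k + 3))) * f (k + 3) * φ (X 0) ^ (k + 2) * φ (X 1) ^ (k + 2)) * hq'
        + (φ (C (l (k + 3))) * φ q * φ (X 1)) * hp1'
        + (φ (X 1) ^ 3 * φ (X 0) ^ 2 * φ p) * c2
        - (φ q * φ (X 1) * φ p') * c1
    · -- degree bound
      refine le_trans (totalDegree_sub _ _) (max_le ?_ ?_)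
      · refine le_trans (totalDegree_mul _ _) ?_
        rw [totalDegree_C, zero_add]
        have h1 := totalDegree_mul q p'
        omega
      · refine le_trans (totalDegree_mul _ _) ?_
        rw [totalDegree_C, zero_add]
        have h1 := totalDegree_mul (X (0 : Fin 2) ^ 2) (X (1 : Fin 2) ^ 2 * p)
        have h2 := totalDegree_mul (X (1 : Fin 2) ^ 2) p
        have h3 := totalDegree_X_pow (R := ℝ) (0 : Fin 2) 2
        have h4 := totalDegree_X_pow (R := ℝ) (1 : Fin 2) 2
        omega
    · -- constant coefficient
      have h1 : constantCoeff (C u * (q * p')) = u * (l 2 * β 2 * constantCoeff p') := by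
        rw [map_mul, map_mul, constantCoeff_C, hqcc]
      have h2 : constantCoeff (C v * (X (0 : Fin 2) ^ 2 * (X 1 ^ 2 * p))) = 0 := by
        rw [map_mul, map_mul, map_pow, constantCoeff_X]
        ring
      rw [map_sub, h1, h2, sub_zero]
      exact mul_pos hupos (mul_pos (mul_pos (hlpos 2) (hβ 2)) hp3')
    · -- leading coefficient
      have hN : 2 * (k + 2) + 2 = (2 * k + 4) + 2 := by ring
      rw [hN]
      have hqp : q * p' = C (l 2 * α 2) * (X 1 ^ 2 * p') + C (l 2 * β 2) * p'
          + C (l 0) * (X 0 ^ 2 * p') := by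
        rw [hqdef]; ring
      rw [coeff_sub, coeff_C_mul, coeff_C_mul, coeff_X0sq_mul', hqp,
        coeff_add, coeff_add, coeff_C_mul, coeff_C_mul, coeff_C_mul,
        coeff_X1sq_mul', coeff_X0sq_mul',
        coeff_beyond' (n := 2 * k + 4 + 2) hp2' (by omega)]
      have h5 : 0 < coeff (Finsupp.single (1 : Fin 2) (2 * k + 4)) p' := by
        have : 2 * (k + 1) + 2 = 2 * k + 4 := by ring
        rwa [this] at hp4'
      have h6 := mul_pos (mul_pos (hlpos 2) (hα 2)) h5
      have h7 := mul_pos hupos h6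
      nlinarith [h7]
  have key : ∀ k, S k ∧ S (k + 1) := by
    intro k
    induction k with
    | zero => exact ⟨base0, base1⟩
    | succ k ih => exact ⟨ih.2, step k ih.1 ih.2⟩
  constructor
  · intro m hm
    obtain ⟨k, rfl⟩ : ∃ k, m = k + 2 := ⟨m - 2, by omega⟩
    obtain ⟨p, hp1, hp2, hp3, hp4⟩ := (key k).1
    refine ⟨p, ?_, ?_, ?_, ?_⟩
    · rintro ⟨r, rfl⟩
      rw [map_mul, constantCoeff_X, zero_mul] at hp3
      exact lt_irrefl 0 hp3
    · rintro ⟨r, rfl⟩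
      rw [map_mul, constantCoeff_X, zero_mul] at hp3
      exact lt_irrefl 0 hp3
    · show f (k + 2) * φ (X 0 ^ (k + 2 - 1) * X 1 ^ (k + 2 - 2)) = φ p
      rw [show k + 2 - 1 = k + 1 from rfl, show k + 2 - 2 = k from rfl, map_mul, map_pow, map_pow]
      exact hp1
    · have hge := totalDegree_lower' (ne_of_gt hp4)
      omega
  · exact tendsto_aux'
end

section
/- For the recurrence f_m = (f_{m-1}^r + 1)/f_{m-2} with integer r ≥ 3 and f_0 = X, f_1 = Y, the denominators q_m of the Laurent-polynomial iterates satisfy q_m = q_{m-1}^r / q_{m-2} (with q_2 = X, q_3 = X^r Y), so that deg q_m grows like λ^m with λ = (r + √(r²−4))/2; hence the algebraic entropy of the equation equals log λ > 0. -/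
/-!
Write `f (n + 2) = P n / Q n` with `Q n = X ^ a (n + 1) * Y ^ a n`, where `a 0 = 0`, `a 1 = 1` and
`a (n + 2) + a n = r * a (n + 1)`, so that `Q (n + 2) * Q n = Q (n + 1) ^ r`. The recurrence for `f`
becomes `P (n + 2) * P n = P (n + 1) ^ r + Q (n + 1) ^ r`, and the division by `P n` is exact
(Laurent phenomenon): inductively `P (n + 1)` divides `P n ^ r + Q n ^ r` and has no monomial
factor, hence is coprime to `P n * Q n`, while modulo `P (n + 1)`
`(P (n + 2) ^ r + Q (n + 2) ^ r) * (P n * Q n) ^ r ≡ Q (n + 1) ^ (r * r) * (P n ^ r + Q n ^ r) ≡ 0`.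
Since `deg Q n < deg P n`, the degree of `P (n + 1) ^ r + Q (n + 1) ^ r` is `r * deg P (n + 1)`,
so `deg P n` satisfies the same linear recurrence, whose dominant root is
`λ = (r + √(r² - 4)) / 2`; Binet's formula then gives `deg P n ~ c λ ^ n` with `c > 0`.
-/

open Filter Topology Real MvPolynomial

theorem sub_mul_eq_binet {R : Type*} [CommRing R] {L M : R} {u : ℕ → R}
    (hu : ∀ n, u (n + 2) = (L + M) * u (n + 1) - L * M * u n) (n : ℕ) :
    (L - M) * u n = L ^ n * (u 1 - M * u 0) - M ^ n * (u 1 - L * u 0) := by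
  induction n using Nat.twoStepInduction with
  | zero => ring
  | one => ring
  | more n ih₀ ih₁ => rw [hu]; linear_combination (L + M) * ih₁ - L * M * ih₀

theorem tendsto_div_pow_of_rec {L M : ℝ} {u : ℕ → ℝ} (hM : 0 ≤ M) (hML : M < L)
    (hu : ∀ n, u (n + 2) = (L + M) * u (n + 1) - L * M * u n) :
    Tendsto (fun n ↦ u n / L ^ n) atTop (𝓝 ((u 1 - M * u 0) / (L - M))) := by
  have hL : 0 < L := hM.trans_lt hML
  have hform : ∀ n,
      u n / L ^ n = ((u 1 - M * u 0) - (M / L) ^ n * (u 1 - L * u 0)) / (L - M) := by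
    intro n
    rw [div_pow, eq_div_iff (sub_pos.2 hML).ne', div_mul_eq_mul_div, mul_comm,
      sub_mul_eq_binet hu]
    field_simp
  have hpow : Tendsto (fun n ↦ (M / L) ^ n) atTop (𝓝 0) :=
    tendsto_pow_atTop_nhds_zero_of_lt_one (div_nonneg hM hL.le) ((div_lt_one hL).2 hML)
  simp_rw [hform]
  simpa using ((hpow.mul_const (u 1 - L * u 0)).const_sub (u 1 - M * u 0)).div_const (L - M)

theorem tendsto_log_div_of_tendsto_div_pow {u : ℕ → ℝ} {L c : ℝ} (hL : 0 < L) (hc : 0 < c)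
    (h : Tendsto (fun n ↦ u n / L ^ n) atTop (𝓝 c)) :
    Tendsto (fun n : ℕ ↦ log (u n) / n) atTop (𝓝 (log L)) := by
  have hlog : Tendsto (fun n : ℕ ↦ log L + log (u n / L ^ n) / n) atTop (𝓝 (log L)) := by
    simpa using ((h.log hc.ne').div_atTop tendsto_natCast_atTop_atTop).const_add (log L)
  refine hlog.congr' ?_
  filter_upwards [h.eventually (lt_mem_nhds hc), eventually_ne_atTop 0] with n hpos hn
  have hun : 0 < u n := (div_pos_iff_of_pos_right (pow_pos hL n)).1 hpos
  rw [log_div hun.ne' (pow_pos hL n).ne', log_pow]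
  field_simp
  ring

theorem tendsto_div_pow_comp_sub {u : ℕ → ℝ} {L c : ℝ} (k : ℕ)
    (h : Tendsto (fun n ↦ u n / L ^ n) atTop (𝓝 c)) :
    Tendsto (fun n ↦ u (n - k) / L ^ n) atTop (𝓝 (c / L ^ k)) := by
  rw [← tendsto_add_atTop_iff_nat k]
  simpa [pow_add, div_div] using h.div_const (L ^ k)

noncomputable def dominantRoot (r : ℝ) : ℝ := (r + √(r ^ 2 - 4)) / 2

theorem dominantRoot_mul_conj {r : ℝ} (hr : 2 ≤ r) :
    dominantRoot r * ((r - √(r ^ 2 - 4)) / 2) = 1 := by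
  have hs := Real.sq_sqrt (show 0 ≤ r ^ 2 - 4 by nlinarith)
  unfold dominantRoot
  linear_combination -hs / 4

theorem dominantRoot_add_inv {r : ℝ} (hr : 2 ≤ r) :
    dominantRoot r + (dominantRoot r)⁻¹ = r := by
  rw [inv_eq_of_mul_eq_one_right (dominantRoot_mul_conj hr), dominantRoot]
  ring

theorem one_lt_dominantRoot {r : ℝ} (hr : 2 < r) : 1 < dominantRoot r := by
  have := Real.sqrt_nonneg (r ^ 2 - 4)
  unfold dominantRoot
  linarith

theorem exists_tendsto_div_dominantRoot_pow {r : ℝ} (hr : 2 < r) {u : ℕ → ℝ}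
    (hu : ∀ n, u (n + 2) + u n = r * u (n + 1)) (h01 : u 0 ≤ u 1) (h1 : 0 < u 1) :
    ∃ c > 0, Tendsto (fun n ↦ u n / dominantRoot r ^ n) atTop (𝓝 c) := by
  set L := dominantRoot r
  have hL : 1 < L := one_lt_dominantRoot hr
  have hM : 0 < L⁻¹ := inv_pos.2 (by linarith)
  have hM1 : L⁻¹ < 1 := inv_lt_one_of_one_lt₀ hL
  have hu' : ∀ n, u (n + 2) = (L + L⁻¹) * u (n + 1) - L * L⁻¹ * u n := fun n ↦ by
    rw [dominantRoot_add_inv hr.le, mul_inv_cancel₀ (by linarith)]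
    linarith [hu n]
  refine ⟨_, div_pos ?_ (by linarith), tendsto_div_pow_of_rec hM.le (by linarith) hu'⟩
  nlinarith [mul_nonneg hM.le (sub_nonneg.2 h01)]

theorem dvd_pow_add_pow_of_rec {R : Type*} [CommRing R] [DecompositionMonoid R] {r : ℕ}
    (hr : r ≠ 0) {p₁ p₂ p₃ q₁ q₂ q₃ : R} (hp₃ : p₃ * p₁ = p₂ ^ r + q₂ ^ r)
    (hp₂ : p₂ ∣ p₁ ^ r + q₁ ^ r) (hq : q₃ * q₁ = q₂ ^ r) (hcop : IsRelPrime p₂ q₁) :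
    p₂ ∣ p₃ ^ r + q₃ ^ r := by
  have hcop₁ : IsRelPrime p₂ p₁ := fun d hd₂ hd₁ ↦ hcop.pow_right (n := r) hd₂ <| by
    simpa using dvd_sub (hd₂.trans hp₂) (dvd_pow hd₁ hr)
  refine ((hcop₁.mul_right hcop).pow_right (n := r)).dvd_of_dvd_mul_right ?_
  -- modulo `p₂`, `p₃ p₁ ≡ q₂ ^ r` and `p₁ ^ r ≡ - q₁ ^ r`
  have hp₂' : p₂ ∣ (p₃ * p₁) ^ r - (q₂ ^ r) ^ r :=
    (dvd_pow_self p₂ hr).trans <| by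
      simpa [hp₃] using sub_dvd_pow_sub_pow (p₃ * p₁) (q₂ ^ r) r
  have key : (p₃ ^ r + q₃ ^ r) * (p₁ * q₁) ^ r
      = ((p₃ * p₁) ^ r - (q₂ ^ r) ^ r) * q₁ ^ r + (q₂ ^ r) ^ r * (p₁ ^ r + q₁ ^ r) := by
    rw [← hq]; ring
  rw [key]
  exact dvd_add (dvd_mul_of_dvd_left hp₂' _) (dvd_mul_of_dvd_right hp₂ _)

theorem totalDegree_pow_of_isDomain {σ R : Type*} [CommRing R] [IsDomain R]
    (p : MvPolynomial σ R) (n : ℕ) : (p ^ n).totalDegree = n * p.totalDegree := by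
  rcases eq_or_ne p 0 with rfl | hp
  · cases n <;> simp
  induction n with
  | zero => simp
  | succ n ih => rw [pow_succ, totalDegree_mul_of_isDomain (pow_ne_zero n hp) hp, ih]; ring

theorem totalDegree_pow_add_pow_of_lt {σ R : Type*} [CommRing R] [IsDomain R] {r : ℕ}
    (hr : r ≠ 0) {p q : MvPolynomial σ R} (h : q.totalDegree < p.totalDegree) :
    (p ^ r + q ^ r).totalDegree = r * p.totalDegree := by
  rw [totalDegree_add_eq_left_of_totalDegree_lt, totalDegree_pow_of_isDomain]
  simpa only [totalDegree_pow_of_isDomain] using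
    Nat.mul_lt_mul_of_pos_left h (Nat.pos_of_ne_zero hr)

theorem lt_of_two_step_rec {r : ℕ} (hr : 2 ≤ r) {c D : ℕ → ℕ}
    (hc : ∀ n, c (n + 2) + c n = r * c (n + 1))
    (hD : ∀ n, c (n + 1) < D (n + 1) → D (n + 2) + D n = r * D (n + 1))
    (h0 : c 0 < D 0) (h1 : D 0 + c 1 ≤ D 1 + c 0) (n : ℕ) : c n < D n := by
  -- the gap `D n - c n` is positive and nondecreasing
  suffices ∀ n, c n < D n ∧ D n + c (n + 1) ≤ D (n + 1) + c n from (this n).1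
  intro n
  induction n with
  | zero => exact ⟨h0, h1⟩
  | succ n ih =>
    have hlt : c (n + 1) < D (n + 1) := by omega
    have := hD n hlt
    have := hc n
    refine ⟨hlt, ?_⟩
    nlinarith [Nat.mul_le_mul_right (D (n + 1) - c (n + 1)) hr, Nat.sub_add_cancel hlt.le]

def denomExp (r : ℕ) : ℕ → ℕ
  | 0 => 0
  | 1 => 1
  | n + 2 => r * denomExp r (n + 1) - denomExp r n

section denomExp

variable {r : ℕ} (hr : 2 ≤ r)
include hr

theorem denomExp_le_succ (n : ℕ) : denomExp r n ≤ denomExp r (n + 1) := by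
  induction n with
  | zero => simp [denomExp]
  | succ n ih =>
    have := Nat.mul_le_mul_right (denomExp r (n + 1)) hr
    simp only [denomExp]
    omega

theorem denomExp_add_two_add (n : ℕ) :
    denomExp r (n + 2) + denomExp r n = r * denomExp r (n + 1) := by
  have := Nat.mul_le_mul_right (denomExp r (n + 1)) hr
  have := denomExp_le_succ hr n
  simp only [denomExp]
  omega

theorem denomExp_succ_pos (n : ℕ) : 0 < denomExp r (n + 1) := by
  induction n with
  | zero => simp [denomExp]
  | succ n ih => exact ih.trans_le (denomExp_le_succ hr _)

end denomExp

section polynomials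

variable {k : Type*} [Field k]

def HasNoMonomialFactor (p : MvPolynomial (Fin 2) k) : Prop := ∀ i, ¬ X i ∣ p

theorem HasNoMonomialFactor.ne_zero {p : MvPolynomial (Fin 2) k} (hp : HasNoMonomialFactor p) :
    p ≠ 0 := by
  rintro rfl
  exact hp 0 (dvd_zero _)

theorem hasNoMonomialFactor_of_eval_zero_ne_zero {p : MvPolynomial (Fin 2) k}
    (h : eval 0 p ≠ 0) : HasNoMonomialFactor p := by
  rintro i ⟨c, rfl⟩
  simp at h

theorem HasNoMonomialFactor.isRelPrime_X_pow_mul_X_pow {p : MvPolynomial (Fin 2) k}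
    (hp : HasNoMonomialFactor p) (a b : ℕ) : IsRelPrime p (X 0 ^ a * X 1 ^ b) :=
  (X_prime.irreducible.isRelPrime_iff_not_dvd.2 (hp 0)).symm.pow_right.mul_right
    (X_prime.irreducible.isRelPrime_iff_not_dvd.2 (hp 1)).symm.pow_right

/-- The denominator `q_{n+2}` of `f (n + 2)`. -/
noncomputable def denom (r n : ℕ) : MvPolynomial (Fin 2) k :=
  X 0 ^ denomExp r (n + 1) * X 1 ^ denomExp r n

theorem denom_zero (r : ℕ) : (denom r 0 : MvPolynomial (Fin 2) k) = X 0 := by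
  simp [denom, denomExp]

theorem denom_one (r : ℕ) : (denom r 1 : MvPolynomial (Fin 2) k) = X 0 ^ r * X 1 := by
  simp [denom, denomExp]

theorem totalDegree_denom (r n : ℕ) :
    (denom r n : MvPolynomial (Fin 2) k).totalDegree = denomExp r (n + 1) + denomExp r n := by
  rw [denom, totalDegree_mul_of_isDomain (by simp) (by simp), totalDegree_X_pow, totalDegree_X_pow]

section

variable {r : ℕ} (hr : 2 ≤ r)
include hr

theorem denom_add_two_mul (n : ℕ) :
    (denom r (n + 2) * denom r n : MvPolynomial (Fin 2) k) = denom r (n + 1) ^ r := by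
  simp only [denom, mul_pow, ← pow_mul]
  rw [mul_comm _ r, mul_comm _ r, ← denomExp_add_two_add hr, ← denomExp_add_two_add hr]
  ring

theorem X_dvd_denom_succ (i : Fin 2) (n : ℕ) :
    (X i : MvPolynomial (Fin 2) k) ∣ denom r (n + 1) := by
  fin_cases i
  · exact dvd_mul_of_dvd_left (dvd_pow_self _ (denomExp_succ_pos hr _).ne') _
  · exact dvd_mul_of_dvd_right (dvd_pow_self _ (denomExp_succ_pos hr _).ne') _

end

section numerators

variable {K : Type*} [CommRing K] [Algebra (MvPolynomial (Fin 2) k) K] {r : ℕ} {f : ℕ → K}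
  (hrec : ∀ m, f (m + 2) * f m = f (m + 1) ^ r + 1)

local notation "φ" => algebraMap (MvPolynomial (Fin 2) k) K

include hrec

theorem numerator_zero (h0 : f 0 = φ (X 0)) (h1 : f 1 = φ (X 1)) :
    f 2 * φ (denom r 0) = φ (X 1 ^ r + 1) := by
  rw [denom_zero, ← h0, hrec, h1, map_add, map_pow, map_one]

theorem numerator_one (h0 : f 0 = φ (X 0)) (h1 : f 1 = φ (X 1)) :
    f 3 * φ (denom r 1) = φ ((X 1 ^ r + 1) ^ r + X 0 ^ r) := by
  rw [denom_one, map_add, map_pow, ← numerator_zero hrec h0 h1, denom_zero, map_mul, map_pow,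
    ← h0, ← h1]
  linear_combination f 0 ^ r * hrec 1

variable (hr : 2 ≤ r)
include hr

theorem mul_denom_rec (n : ℕ) :
    f (n + 4) * φ (denom r (n + 2)) * (f (n + 2) * φ (denom r n))
      = (f (n + 3) * φ (denom r (n + 1))) ^ r + φ (denom r (n + 1)) ^ r := by
  rw [mul_mul_mul_comm, hrec, ← map_mul, denom_add_two_mul hr, map_pow]
  ring

variable [IsDomain K] [FaithfulSMul (MvPolynomial (Fin 2) k) K]

theorem exists_numerator_step {n : ℕ} {A B : MvPolynomial (Fin 2) k}
    (hA : f (n + 2) * φ (denom r n) = φ A) (hB : f (n + 3) * φ (denom r (n + 1)) = φ B)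
    (hA₀ : HasNoMonomialFactor A) (hB₀ : HasNoMonomialFactor B)
    (hAB : A ∣ B ^ r + denom r (n + 1) ^ r) (hBA : B ∣ A ^ r + denom r n ^ r) :
    ∃ C, f (n + 4) * φ (denom r (n + 2)) = φ C ∧ HasNoMonomialFactor C ∧
      B ∣ C ^ r + denom r (n + 2) ^ r ∧ C ∣ B ^ r + denom r (n + 1) ^ r := by
  have hr₀ : r ≠ 0 := by omega
  obtain ⟨C, hC⟩ := hAB
  have hCA : C * A = B ^ r + denom r (n + 1) ^ r := by rw [hC, mul_comm]
  refine ⟨C, ?_, ?_, ?_, ⟨A, hCA.symm⟩⟩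
  · have hφA : φ A ≠ 0 := by simpa using hA₀.ne_zero
    apply mul_right_cancel₀ hφA
    rw [← map_mul, hCA, ← hA, mul_denom_rec hrec hr, hB, map_add, map_pow, map_pow]
  · intro i hi
    refine hB₀ i (X_prime.dvd_of_dvd_pow (n := r) ?_)
    have hsum : X i ∣ B ^ r + denom r (n + 1) ^ r := hCA ▸ dvd_mul_of_dvd_left hi A
    simpa using dvd_sub hsum (dvd_pow (X_dvd_denom_succ hr i n) hr₀)
  · exact dvd_pow_add_pow_of_rec hr₀ hCA hBA (denom_add_two_mul hr n)
      (hB₀.isRelPrime_X_pow_mul_X_pow _ _)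

theorem exists_numerator (h0 : f 0 = φ (X 0)) (h1 : f 1 = φ (X 1)) (n : ℕ) :
    ∃ P, f (n + 2) * φ (denom r n) = φ P ∧ HasNoMonomialFactor P := by
  suffices ∀ n, ∃ A B, f (n + 2) * φ (denom r n) = φ A ∧
      f (n + 3) * φ (denom r (n + 1)) = φ B ∧ HasNoMonomialFactor A ∧ HasNoMonomialFactor B ∧
      A ∣ B ^ r + denom r (n + 1) ^ r ∧ B ∣ A ^ r + denom r n ^ r by
    obtain ⟨A, -, hA, -, hA₀, -⟩ := this n
    exact ⟨A, hA, hA₀⟩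
  have hr₀ : r ≠ 0 := by omega
  intro n
  induction n with
  | zero =>
    refine ⟨_, _, numerator_zero hrec h0 h1, numerator_one hrec h0 h1,
      hasNoMonomialFactor_of_eval_zero_ne_zero (by simp [hr₀]),
      hasNoMonomialFactor_of_eval_zero_ne_zero (by simp [hr₀]), ?_, by rw [denom_zero]⟩
    -- `(X 1 ^ r + 1) ^ r + X 0 ^ r ≡ X 0 ^ r` modulo `X 1 ^ r + 1`
    obtain ⟨P₀, hP₀⟩ : ∃ P₀ : MvPolynomial (Fin 2) k, P₀ = X 1 ^ r + 1 := ⟨_, rfl⟩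
    have hsub : P₀ ∣ (P₀ ^ r + X 0 ^ r) ^ r - (X 0 ^ r) ^ r := by
      have := sub_dvd_pow_sub_pow (P₀ ^ r + X 0 ^ r) (X 0 ^ r) r
      rw [add_sub_cancel_right] at this
      exact (dvd_pow_self P₀ hr₀).trans this
    have key : (P₀ ^ r + X 0 ^ r) ^ r + denom r 1 ^ r
        = ((P₀ ^ r + X 0 ^ r) ^ r - (X 0 ^ r) ^ r) + (X 0 ^ r) ^ r * P₀ := by
      rw [denom_one, hP₀]; ring
    rw [← hP₀, key]
    exact dvd_add hsub (dvd_mul_left _ _)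
  | succ n ih =>
    obtain ⟨A, B, hA, hB, hA₀, hB₀, hAB, hBA⟩ := ih
    obtain ⟨C, hC, hC₀, hBC, hCB⟩ := exists_numerator_step hrec hr hA hB hA₀ hB₀ hAB hBA
    exact ⟨B, C, hB, hC, hB₀, hC₀, hBC, hCB⟩

end numerators

theorem totalDegree_numerator {r : ℕ} (hr : 2 ≤ r) {P : ℕ → MvPolynomial (Fin 2) k}
    (hne : ∀ n, P n ≠ 0) (hP₀ : P 0 = X 1 ^ r + 1) (hP₁ : P 1 = P 0 ^ r + denom r 0 ^ r)
    (hrel : ∀ n, P (n + 2) * P n = P (n + 1) ^ r + denom r (n + 1) ^ r) :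
    (P 0).totalDegree = r ∧ (P 1).totalDegree = r * r ∧
      ∀ n, (P (n + 2)).totalDegree + (P n).totalDegree = r * (P (n + 1)).totalDegree := by
  have hr₀ : r ≠ 0 := by omega
  have hdeg₀ : (P 0).totalDegree = r := by
    rw [hP₀, totalDegree_add_eq_left_of_totalDegree_lt] <;> simp [totalDegree_X_pow]
    omega
  have hdeg₁ : (P 1).totalDegree = r * r := by
    rw [hP₁, totalDegree_pow_add_pow_of_lt hr₀ (by simp [denom_zero, hdeg₀]; omega), hdeg₀]
  have hstep : ∀ n,
      (denom r (n + 1) : MvPolynomial (Fin 2) k).totalDegree < (P (n + 1)).totalDegree →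
      (P (n + 2)).totalDegree + (P n).totalDegree = r * (P (n + 1)).totalDegree := fun n h ↦ by
    rw [← totalDegree_mul_of_isDomain (hne _) (hne _), hrel,
      totalDegree_pow_add_pow_of_lt hr₀ h]
  refine ⟨hdeg₀, hdeg₁, fun n ↦ hstep n (lt_of_two_step_rec hr
    (c := fun n ↦ (denom r n : MvPolynomial (Fin 2) k).totalDegree)
    (D := fun n ↦ (P n).totalDegree) ?_ hstep ?_ ?_ (n + 1))⟩
  · intro n
    simp only [totalDegree_denom]
    linarith [denomExp_add_two_add hr n, denomExp_add_two_add hr (n + 1)]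
  · simp [totalDegree_denom, hdeg₀, denomExp]
    omega
  · simp [totalDegree_denom, hdeg₀, hdeg₁, denomExp]
    nlinarith

end polynomials

theorem positive_entropy_of_superquadratic_recurrence_general
    (r : ℕ) (hr : 3 ≤ r)
    (x y : FractionRing (MvPolynomial (Fin 2) ℝ))
    (hx : x = algebraMap (MvPolynomial (Fin 2) ℝ) _ (X 0))
    (hy : y = algebraMap (MvPolynomial (Fin 2) ℝ) _ (X 1))
    (f : ℕ → FractionRing (MvPolynomial (Fin 2) ℝ))
    (h0 : f 0 = x) (h1 : f 1 = y)
    (hrec : ∀ m, f (m + 2) * f m = f (m + 1) ^ r + 1) :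
    ∃ p q : ℕ → MvPolynomial (Fin 2) ℝ,
      (∀ m, 2 ≤ m → ¬ (X 0 ∣ p m) ∧ ¬ (X 1 ∣ p m) ∧
        f m * algebraMap (MvPolynomial (Fin 2) ℝ) _ (q m)
          = algebraMap (MvPolynomial (Fin 2) ℝ) _ (p m)) ∧
      q 2 = X 0 ∧ q 3 = X 0 ^ r * X 1 ∧
      (∀ m, q (m + 4) * q (m + 2) = q (m + 3) ^ r) ∧
      Filter.Tendsto
        (fun m : ℕ => Real.log ((p m).totalDegree : ℝ) / m)
        Filter.atTop
        (nhds (Real.log (((r : ℝ) + Real.sqrt ((r : ℝ) ^ 2 - 4)) / 2))) ∧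
      0 < Real.log (((r : ℝ) + Real.sqrt ((r : ℝ) ^ 2 - 4)) / 2) := by
  subst hx hy
  have hr₂ : 2 ≤ r := by omega
  have hr' : (2 : ℝ) < r := by exact_mod_cast hr
  choose P hP hPfree using exists_numerator hrec hr₂ h0 h1
  have hinj := FaithfulSMul.algebraMap_injective (MvPolynomial (Fin 2) ℝ)
    (FractionRing (MvPolynomial (Fin 2) ℝ))
  have hrel : ∀ n, P (n + 2) * P n = P (n + 1) ^ r + denom r (n + 1) ^ r := fun n ↦ hinj <| by
    rw [map_mul, ← hP, ← hP, map_add, map_pow, map_pow, ← hP, mul_denom_rec hrec hr₂]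
  have hP₀ : P 0 = X 1 ^ r + 1 := hinj (by rw [← hP, numerator_zero hrec h0 h1])
  have hP₁ : P 1 = P 0 ^ r + denom r 0 ^ r :=
    hinj (by rw [← hP, numerator_one hrec h0 h1, hP₀, denom_zero])
  obtain ⟨hdeg₀, hdeg₁, hdeg⟩ :=
    totalDegree_numerator hr₂ (fun n ↦ (hPfree n).ne_zero) hP₀ hP₁ hrel
  obtain ⟨c, hc, hlim⟩ := exists_tendsto_div_dominantRoot_pow hr'
    (u := fun n ↦ ((P n).totalDegree : ℝ)) (fun n ↦ by exact_mod_cast hdeg n)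
    (by simp only [hdeg₀, hdeg₁]; exact_mod_cast Nat.le_mul_self r)
    (by simp only [hdeg₁]; positivity)
  have hL := one_lt_dominantRoot hr'
  refine ⟨fun m ↦ P (m - 2), fun m ↦ denom r (m - 2), fun m hm ↦ ?_, denom_zero r,
    denom_one r, denom_add_two_mul hr₂, tendsto_log_div_of_tendsto_div_pow (zero_lt_one.trans hL)
      (div_pos hc (by positivity)) (tendsto_div_pow_comp_sub 2 hlim), log_pos hL⟩
  obtain ⟨n, rfl⟩ := Nat.exists_eq_add_of_le' hm
  simpa using ⟨hPfree n 0, hPfree n 1, hP n⟩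

/-- For `f m = (f (m-1)^r + 1) / f (m-2)` with `r ≥ 3`, the monomial
denominators `q m` of the Laurent iterates satisfy `q (m) * q (m-2) = q (m-1)^r` with
`q 2 = X`, `q 3 = X^r * Y`, so the degrees grow like `λ^m` with
`λ = (r + √(r² - 4))/2`; hence the algebraic entropy equals `log λ > 0`. -/
theorem positive_entropy_of_superquadratic_recurrence
    (r : ℕ) (hr : 3 ≤ r)
    (x y : FractionRing (MvPolynomial (Fin 2) ℝ))
    (hx : x = algebraMap (MvPolynomial (Fin 2) ℝ) _ (X 0))
    (hy : y = algebraMap (MvPolynomial (Fin 2) ℝ) _ (X 1))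
    (f : ℕ → FractionRing (MvPolynomial (Fin 2) ℝ))
    (h0 : f 0 = x) (h1 : f 1 = y)
    (hne : ∀ m, f m ≠ 0)
    (hrec : ∀ m, f (m + 2) * f m = f (m + 1) ^ r + 1) :
    ∃ p q : ℕ → MvPolynomial (Fin 2) ℝ,
      (∀ m, 2 ≤ m → ¬ (X 0 ∣ p m) ∧ ¬ (X 1 ∣ p m) ∧
        f m * algebraMap (MvPolynomial (Fin 2) ℝ) _ (q m)
          = algebraMap (MvPolynomial (Fin 2) ℝ) _ (p m)) ∧
      q 2 = X 0 ∧ q 3 = X 0 ^ r * X 1 ∧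
      (∀ m, q (m + 4) * q (m + 2) = q (m + 3) ^ r) ∧
      Filter.Tendsto
        (fun m : ℕ => Real.log ((p m).totalDegree : ℝ) / m)
        Filter.atTop
        (nhds (Real.log (((r : ℝ) + Real.sqrt ((r : ℝ) ^ 2 - 4)) / 2))) ∧
      0 < Real.log (((r : ℝ) + Real.sqrt ((r : ℝ) ^ 2 - 4)) / 2) :=
  positive_entropy_of_superquadratic_recurrence_general r hr x y hx hy f h0 h1 hrec
end

section
/- Let φ : L → L' be a surjective ℤ-linear map between lattices giving a reduction of a discrete bilinear equation (so φ(vᵢ), φ(uᵢ) are ℤ≥0-linearly independent). If H' ⊂ L' is a good domain for the reduced equation, then H = φ⁻¹(H') is a good domain for the original equation, its initial domain is H₀ = φ⁻¹(H₀'), and the pulled-back solution satisfies f_h|_{X_{h₀} = X'_{φ(h₀)}} = f'_{φ(h)} for all h ∈ H; in particular the reduced equation inherits the Laurent property from the original one. -/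
open MvPolynomial

/-!
The pull-back `f' ∘ φ` solves the original recurrence on `φ⁻¹ H'` (since `φ` is additive and
`α' (φ h) = α h`) and has the same initial values as `f`, so the two agree once solutions on a
good domain are known to be determined by their initial values. That uniqueness is a
well-founded induction: the forward cone `H ∩ (h + ℕ-span of the vᵢ, uᵢ)` is finite and shrinks
strictly along every nonzero shift, by ℤ≥0-independence of the shifts. Finiteness of the cones
in `L` is inherited from `L'`: by independence the fibres of
`(a, b) ↦ ∑ aᵢ φ vᵢ + ∑ bᵢ φ uᵢ` are antichains of `ℕⁿ × ℕⁿ`, hence finite by Dickson's lemma.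
-/

section Shifts

variable {M N ι : Type*} [AddCommGroup M] [AddCommGroup N] [Fintype ι]

def shiftMap (v u : ι → M) : (ι → ℕ) × (ι → ℕ) →ₗ[ℕ] M :=
  (Fintype.linearCombination ℕ v).coprod (Fintype.linearCombination ℕ u)

theorem shiftMap_apply (v u : ι → M) (p : (ι → ℕ) × (ι → ℕ)) :
    shiftMap v u p = ∑ i, p.1 i • v i + ∑ i, p.2 i • u i :=
  rfl

@[simp]
theorem shiftMap_single_zero [DecidableEq ι] (v u : ι → M) (i : ι) :
    shiftMap v u (Pi.single i 1, 0) = v i := by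
  simp [shiftMap]

@[simp]
theorem shiftMap_zero_single [DecidableEq ι] (v u : ι → M) (i : ι) :
    shiftMap v u (0, Pi.single i 1) = u i := by
  simp [shiftMap]

@[simp]
theorem shiftMap_single_single [DecidableEq ι] (v u : ι → M) (i : ι) :
    shiftMap v u (Pi.single i 1, Pi.single i 1) = v i + u i := by
  simp [shiftMap]

theorem map_shiftMap (φ : M →+ N) (v u : ι → M) (p : (ι → ℕ) × (ι → ℕ)) :
    φ (shiftMap v u p) = shiftMap (φ ∘ v) (φ ∘ u) p := by
  simp [shiftMap_apply]

def forwardCone (v u : ι → M) (H : Set M) (h : M) : Set M :=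
  {g ∈ H | ∃ p, g = h + shiftMap v u p}

theorem isGoodDomain_iff {n : ℕ} (v u : Fin n → M) (H : Set M) :
    IsGoodDomain v u H ↔ H.Nonempty ∧ (∀ h ∈ H, (forwardCone v u H h).Finite) ∧
      ∀ h ∈ H, ∀ p, h - shiftMap v u p ∈ H := by
  simp only [IsGoodDomain, forwardCone, shiftMap_apply, Prod.forall, Prod.exists, add_assoc,
    sub_sub]

variable {v u : ι → M}

theorem isAntichain_shiftMap_fiber (hind : ∀ p, shiftMap v u p = 0 → p = 0) (d : M) :
    IsAntichain (· ≤ ·) (shiftMap v u ⁻¹' {d}) := by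
  intro p hp q hq hne hle
  obtain ⟨r, rfl⟩ := exists_add_of_le hle
  have hr : shiftMap v u r = 0 := by
    simpa [map_add, show shiftMap v u p = d from hp] using hq
  exact hne (by rw [hind r hr, add_zero])

theorem finite_shiftMap_fiber (hind : ∀ p, shiftMap v u p = 0 → p = 0) (d : M) :
    (shiftMap v u ⁻¹' {d}).Finite :=
  WellQuasiOrderedLE.finite_of_isAntichain (isAntichain_shiftMap_fiber hind d)

theorem forwardCone_ssubset (hind : ∀ p, shiftMap v u p = 0 → p = 0) {H : Set M} {h : M}
    (hh : h ∈ H) {p : (ι → ℕ) × (ι → ℕ)} (hp : p ≠ 0) :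
    forwardCone v u H (h + shiftMap v u p) ⊂ forwardCone v u H h := by
  refine ⟨?_, fun hsub => ?_⟩
  · rintro g ⟨hg, q, rfl⟩
    exact ⟨hg, p + q, by rw [map_add, add_assoc]⟩
  · obtain ⟨-, q, hq⟩ := hsub ⟨hh, 0, by rw [map_zero, add_zero]⟩
    have hpq : shiftMap v u (p + q) = 0 :=
      left_eq_add.1 (by rwa [map_add, ← add_assoc])
    exact hp (add_eq_zero.1 (hind _ hpq)).1

theorem forwardCone_induction (hind : ∀ p, shiftMap v u p = 0 → p = 0) {H : Set M}
    (hfin : ∀ h ∈ H, (forwardCone v u H h).Finite) {P : M → Prop}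
    (step : ∀ h ∈ H, (∀ p ≠ 0, h + shiftMap v u p ∈ H → P (h + shiftMap v u p)) → P h) :
    ∀ h ∈ H, P h := by
  intro h hh
  induction hc : (forwardCone v u H h).ncard using Nat.strong_induction_on generalizing h with
  | _ N ih =>
    refine step h hh fun p hp hg => ih _ ?_ _ hg rfl
    exact hc ▸ Set.ncard_lt_ncard (forwardCone_ssubset hind hh hp) (hfin h hh)

theorem finite_forwardCone_preimage (φ : M →+ N)
    (hind : ∀ p, shiftMap (φ ∘ v) (φ ∘ u) p = 0 → p = 0) {H' : Set N} {h : M}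
    (hfin : (forwardCone (φ ∘ v) (φ ∘ u) H' (φ h)).Finite) :
    (forwardCone v u (φ ⁻¹' H') h).Finite := by
  have hshifts : (shiftMap (φ ∘ v) (φ ∘ u) ⁻¹'
      ((φ h + ·) ⁻¹' forwardCone (φ ∘ v) (φ ∘ u) H' (φ h))).Finite :=
    (hfin.preimage (add_right_injective _).injOn).preimage' fun d _ =>
      finite_shiftMap_fiber hind d
  refine (hshifts.image fun p => h + shiftMap v u p).subset ?_
  rintro g ⟨hg, p, rfl⟩
  refine ⟨p, ⟨?_, p, rfl⟩, rfl⟩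
  simpa [map_shiftMap] using hg

theorem IsGoodDomain.preimage {n : ℕ} {v u : Fin n → M} {φ : M →+ N}
    (hφ : Function.Surjective φ) (hind : ∀ p, shiftMap (φ ∘ v) (φ ∘ u) p = 0 → p = 0)
    {H' : Set N} (hH : IsGoodDomain (φ ∘ v) (φ ∘ u) H') : IsGoodDomain v u (φ ⁻¹' H') := by
  obtain ⟨hne, hfin, hclosed⟩ := (isGoodDomain_iff _ _ _).1 hH
  refine (isGoodDomain_iff _ _ _).2 ⟨hne.preimage hφ, fun h hh => ?_, fun h hh p => ?_⟩
  · exact finite_forwardCone_preimage φ hind (hfin _ hh)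
  · simpa [map_shiftMap] using hclosed _ hh p

end Shifts

section Recurrence

variable {M ι K : Type*} [AddCommGroup M] [Fintype ι] [CommRing K] [IsDomain K]

theorem eqOn_of_recurrence {v u : ι → M} {w : M} (hw : ∀ i, v i + u i = w) {H : Set M}
    (hind : ∀ p, shiftMap v u p = 0 → p = 0) (hfin : ∀ h ∈ H, (forwardCone v u H h).Finite)
    (hclosed : ∀ h ∈ H, ∀ p, h - shiftMap v u p ∈ H) {c : ι → M → K} {F G : M → K}
    (hF : ∀ h ∈ H, h + w ∈ H → F h * F (h + w) = ∑ i, c i h * F (h + v i) * F (h + u i))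
    (hG : ∀ h ∈ H, h + w ∈ H → G h * G (h + w) = ∑ i, c i h * G (h + v i) * G (h + u i))
    (hF0 : ∀ h ∈ H, F h ≠ 0) (hinit : ∀ h ∈ H, h + w ∉ H → F h = G h) :
    Set.EqOn F G H := by
  classical
  refine forwardCone_induction hind hfin fun h hh ih => ?_
  by_cases hhw : h + w ∉ H
  · exact hinit h hh hhw
  rw [not_not] at hhw
  -- `w = v i₀ + u i₀` has to be written as a nonzero shift; for empty `ι` the recurrence
  -- would force `F h * F (h + w) = 0`.
  obtain ⟨i₀⟩ : Nonempty ι := by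
    by_contra hι
    have := hF h hh hhw
    simp [not_nonempty_iff.1 hι, hF0 h hh, hF0 _ hhw] at this
  have hvu : ∀ i, h + v i ∈ H ∧ h + u i ∈ H := fun i =>
    ⟨by simpa [← hw i, add_sub_assoc] using hclosed _ hhw (0, Pi.single i 1),
     by simpa [← hw i, add_sub_assoc] using hclosed _ hhw (Pi.single i 1, 0)⟩
  have ihv : ∀ i, F (h + v i) = G (h + v i) := fun i => by
    simpa using ih (Pi.single i 1, 0) (by simp) (by simpa using (hvu i).1)
  have ihu : ∀ i, F (h + u i) = G (h + u i) := fun i => by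
    simpa using ih (0, Pi.single i 1) (by simp) (by simpa using (hvu i).2)
  have ihw : F (h + w) = G (h + w) := by
    simpa [hw] using ih (Pi.single i₀ 1, Pi.single i₀ 1) (by simp) (by simpa [hw] using hhw)
  refine mul_right_cancel₀ (hF0 _ hhw) ?_
  calc F h * F (h + w) = ∑ i, c i h * G (h + v i) * G (h + u i) := by
        simp only [hF h hh hhw, ihv, ihu]
    _ = G h * F (h + w) := by rw [← hG h hh hhw, ihw]

end Recurrence

theorem reduction_preserves_laurent_property_general
    (k : Type*) [Field k]
    (L L' : Type*) [AddCommGroup L] [AddCommGroup L']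
    (n : ℕ) (v u : Fin n → L) (w : L) (hw : ∀ i, v i + u i = w)
    (φ : L →+ L') (hsurj : Function.Surjective φ)
    (hind : ∀ a b : Fin n → ℕ,
      ((∑ i, a i • φ (v i)) + ∑ i, b i • φ (u i) = 0) → ∀ i, a i = 0 ∧ b i = 0)
    (α : Fin n → L → k)
    (α' : Fin n → L' → k) (hα' : ∀ i h, α' i (φ h) = α i h)
    (H' H₀' : Set L')
    (hgood' : IsGoodDomain (fun i => φ (v i)) (fun i => φ (u i)) H')
    (hH₀' : H₀' = {h' ∈ H' | h' + φ w ∉ H'})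
    (x' : L' → FractionRing (MvPolynomial L' k))
    (cst : k → FractionRing (MvPolynomial L' k))
    (f' : L' → FractionRing (MvPolynomial L' k))
    (hinit' : ∀ h' ∈ H₀', f' h' = x' h')
    (hrec' : ∀ h' ∈ H', h' ∉ H₀' →
      f' h' * f' (h' + φ w)
        = ∑ i, cst (α' i h') * f' (h' + φ (v i)) * f' (h' + φ (u i)))
    (f : L → FractionRing (MvPolynomial L' k))
    (hinit : ∀ h ∈ φ ⁻¹' H', h + w ∉ φ ⁻¹' H' → f h = x' (φ h))
    (hne : ∀ h ∈ φ ⁻¹' H', f h ≠ 0)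
    (hrec : ∀ h ∈ φ ⁻¹' H', h + w ∈ φ ⁻¹' H' →
      f h * f (h + w) = ∑ i, cst (α i h) * f (h + v i) * f (h + u i)) :
    IsGoodDomain v u (φ ⁻¹' H') ∧
    {h ∈ φ ⁻¹' H' | h + w ∉ φ ⁻¹' H'} = φ ⁻¹' H₀' ∧
    (∀ h ∈ φ ⁻¹' H', f h = f' (φ h)) ∧
    ((∀ h ∈ φ ⁻¹' H', f h ∈ Algebra.adjoin k
        {z : FractionRing (MvPolynomial L' k) |
          ∃ h₀' ∈ H₀', z = x' h₀' ∨ z = (x' h₀')⁻¹}) →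
      ∀ h' ∈ H', f' h' ∈ Algebra.adjoin k
        {z : FractionRing (MvPolynomial L' k) |
          ∃ h₀' ∈ H₀', z = x' h₀' ∨ z = (x' h₀')⁻¹}) := by
  have hind' : ∀ p, shiftMap (φ ∘ v) (φ ∘ u) p = 0 → p = 0 := fun p hp =>
    Prod.ext (funext fun i => (hind p.1 p.2 hp i).1) (funext fun i => (hind p.1 p.2 hp i).2)
  have hgood : IsGoodDomain v u (φ ⁻¹' H') := hgood'.preimage hsurj hind'
  have hinitial : {h ∈ φ ⁻¹' H' | h + w ∉ φ ⁻¹' H'} = φ ⁻¹' H₀' := by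
    ext h
    simp [hH₀']
  have hsol : Set.EqOn f (f' ∘ φ) (φ ⁻¹' H') := by
    obtain ⟨-, hfin, hclosed⟩ := (isGoodDomain_iff v u _).1 hgood
    refine eqOn_of_recurrence hw (fun p hp => hind' p (by rw [← map_shiftMap, hp, map_zero]))
      hfin hclosed hrec (fun h hh hhw => ?_) hne fun h hh hhw => ?_
    · simpa [hα'] using hrec' (φ h) hh (by rw [hH₀']; exact fun h0 => h0.2 (by simpa using hhw))
    · rw [hinit h hh hhw, Function.comp_apply, hinit' _ (hinitial.subset ⟨hh, hhw⟩)]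
  refine ⟨hgood, hinitial, fun h hh => hsol hh, fun hlaurent h' hh' => ?_⟩
  obtain ⟨h, rfl⟩ := hsurj h'
  rw [← Function.comp_apply (f := f'), ← hsol hh']
  exact hlaurent h hh'

/-- Reductions preserve the Laurent property: if `φ : L → L'` is a
surjective `ℤ`-linear reduction of a discrete bilinear equation and `H'` is a good
domain for the reduced equation, then `H = φ⁻¹(H')` is a good domain for the original
equation with initial domain `φ⁻¹(H₀')`, the pulled-back solution (with initial values
`X' (φ h₀)`) satisfies `f h = f' (φ h)`, and the reduced equation inherits the Laurent
property from the original one. -/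
theorem reduction_preserves_laurent_property
    (k : Type*) [Field k]
    (L L' : Type*) [AddCommGroup L] [AddCommGroup L']
    [Module.Free ℤ L] [Module.Finite ℤ L]
    [Module.Free ℤ L'] [Module.Finite ℤ L']
    (n : ℕ) (v u : Fin n → L) (w : L) (hw : ∀ i, v i + u i = w)
    (φ : L →+ L') (hsurj : Function.Surjective φ)
    (hind : ∀ a b : Fin n → ℕ,
      ((∑ i, a i • φ (v i)) + ∑ i, b i • φ (u i) = 0) → ∀ i, a i = 0 ∧ b i = 0)
    (hdistinct : ∀ i j, i ≠ j →
      φ (v i) ≠ φ (v j) ∧ φ (u i) ≠ φ (u j) ∧ φ (v i) ≠ φ (u j))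
    (α : Fin n → L → k) (hα : ∀ i h, α i h ≠ 0)
    (hker : ∀ i (h g : L), φ g = 0 → α i (h + g) = α i h)
    (α' : Fin n → L' → k) (hα' : ∀ i h, α' i (φ h) = α i h)
    (H' H₀' : Set L')
    (hgood' : IsGoodDomain (fun i => φ (v i)) (fun i => φ (u i)) H')
    (hH₀' : H₀' = {h' ∈ H' | h' + φ w ∉ H'})
    (x' : L' → FractionRing (MvPolynomial L' k))
    (hx' : ∀ h', x' h' = algebraMap (MvPolynomial L' k) _ (X h'))
    (cst : k → FractionRing (MvPolynomial L' k))
    (hcst : ∀ c, cst c = algebraMap (MvPolynomial L' k) _ (C c))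
    (f' : L' → FractionRing (MvPolynomial L' k))
    (hinit' : ∀ h' ∈ H₀', f' h' = x' h')
    (hne' : ∀ h' ∈ H', f' h' ≠ 0)
    (hrec' : ∀ h' ∈ H', h' ∉ H₀' →
      f' h' * f' (h' + φ w)
        = ∑ i, cst (α' i h') * f' (h' + φ (v i)) * f' (h' + φ (u i)))
    (f : L → FractionRing (MvPolynomial L' k))
    (hinit : ∀ h ∈ φ ⁻¹' H', h + w ∉ φ ⁻¹' H' → f h = x' (φ h))
    (hne : ∀ h ∈ φ ⁻¹' H', f h ≠ 0)
    (hrec : ∀ h ∈ φ ⁻¹' H', h + w ∈ φ ⁻¹' H' →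
      f h * f (h + w) = ∑ i, cst (α i h) * f (h + v i) * f (h + u i)) :
    IsGoodDomain v u (φ ⁻¹' H') ∧
    {h ∈ φ ⁻¹' H' | h + w ∉ φ ⁻¹' H'} = φ ⁻¹' H₀' ∧
    (∀ h ∈ φ ⁻¹' H', f h = f' (φ h)) ∧
    ((∀ h ∈ φ ⁻¹' H', f h ∈ Algebra.adjoin k
        {z : FractionRing (MvPolynomial L' k) |
          ∃ h₀' ∈ H₀', z = x' h₀' ∨ z = (x' h₀')⁻¹}) →
      ∀ h' ∈ H', f' h' ∈ Algebra.adjoin k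
        {z : FractionRing (MvPolynomial L' k) |
          ∃ h₀' ∈ H₀', z = x' h₀' ∨ z = (x' h₀')⁻¹}) :=
  reduction_preserves_laurent_property_general k L L' n v u w hw φ hsurj hind α α' hα' H' H₀' hgood'
    hH₀' x' cst f' hinit' hrec' f hinit hne hrec
end
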